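/- arXiv:1810.06302 — 6 statements merged into one kernel-verified Lean document; each statement's English description precedes it below -/
import Mathlib

section
/- For an n×n real symmetric trace-free matrix A (n ≥ 3), the tensor V' defined by V'_{ijkl} = -(2/(n-2))(A² ⊙ g)_{ijkl} + (2/(n(n-2)))‖A‖²(g ⊙ g)_{ijkl} satisfies |V'|² = (16/(n-2))‖A²‖² - (16/(n(n-2)))‖A‖⁴. -/
open Finset

lemma sum_if_pull {α : Type*} [Fintype α] (P : Prop) [Decidable P] (f : α → ℝ) :
    ∑ x, (if P then f x else 0) = if P then ∑ x, f x else 0 := by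
  split <;> simp

lemma knδ_inner (n : ℕ) (h k : Fin n → Fin n → ℝ) :
    ∑ i, ∑ j, ∑ p, ∑ q,
      ((h i p * (if j = q then (1:ℝ) else 0) - h i q * (if j = p then (1:ℝ) else 0)
        + h j q * (if i = p then (1:ℝ) else 0) - h j p * (if i = q then (1:ℝ) else 0)) *
       (k i p * (if j = q then (1:ℝ) else 0) - k i q * (if j = p then (1:ℝ) else 0)
        + k j q * (if i = p then (1:ℝ) else 0) - k j p * (if i = q then (1:ℝ) else 0)))
    = 4*((n:ℝ)-2) * (∑ i, ∑ j, h i j * k i j) + 4 * (∑ i, h i i) * (∑ i, k i i) := by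
  have c3 : (∑ x : Fin n, ∑ x_1 : Fin n, h x_1 x * k x_1 x) = ∑ i, ∑ j, h i j * k i j :=
    Finset.sum_comm
  have c2 : (∑ x : Fin n, ∑ x_1 : Fin n, h x_1 x_1 * k x x) = (∑ i, h i i) * (∑ i, k i i) := by
    rw [Finset.sum_comm, Finset.sum_mul_sum]
  have c2' : (∑ x : Fin n, ∑ x_1 : Fin n, h x x * k x_1 x_1) = (∑ i, h i i) * (∑ i, k i i) := by
    rw [Finset.sum_mul_sum]
  simp only [sub_mul, mul_sub, add_mul, mul_add, mul_ite, ite_mul, mul_one, mul_zero,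
    one_mul, zero_mul, Finset.sum_sub_distrib, Finset.sum_add_distrib,
    Finset.sum_ite_eq, Finset.sum_ite_eq', Finset.mem_univ, if_true, sum_if_pull]
  simp only [Finset.sum_const, Finset.card_univ, Fintype.card_fin, nsmul_eq_mul]
  rw [c3, c2, c2']
  simp only [← Finset.mul_sum]
  ring

theorem stmt_4 (n : ℕ) (hn : 3 ≤ n) (A : Fin n → Fin n → ℝ)
    (hsym : ∀ i j, A i j = A j i) (htr : ∑ i, A i i = 0) :
    let δ : Fin n → Fin n → ℝ := fun i j => if i = j then 1 else 0
    let A2 : Fin n → Fin n → ℝ := fun i k => ∑ p, A i p * A p k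
    let KN : (Fin n → Fin n → ℝ) → (Fin n → Fin n → ℝ) → Fin n → Fin n → Fin n → Fin n → ℝ :=
      fun h k i j p q => h i p * k j q - h i q * k j p + h j q * k i p - h j p * k i q
    let nA2 : ℝ := ∑ i, ∑ j, (A i j) ^ 2
    let V : Fin n → Fin n → Fin n → Fin n → ℝ := fun i j p q =>
      -(2 / ((n : ℝ) - 2)) * KN A2 δ i j p q + (2 / ((n : ℝ) * ((n : ℝ) - 2))) * nA2 * KN δ δ i j p q
    ∑ i, ∑ j, ∑ p, ∑ q, (V i j p q) ^ 2
      = (16 / ((n : ℝ) - 2)) * (∑ i, ∑ k, (A2 i k) ^ 2)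
        - (16 / ((n : ℝ) * ((n : ℝ) - 2))) * nA2 ^ 2 := by
  intro δ A2 KN nA2 V
  have hn2 : ((n : ℝ) - 2) ≠ 0 := by
    have : (3 : ℝ) ≤ (n : ℝ) := by exact_mod_cast hn
    nlinarith
  have hn0 : (n : ℝ) ≠ 0 := by
    have : (3 : ℝ) ≤ (n : ℝ) := by exact_mod_cast hn
    nlinarith
  set a : ℝ := -(2 / ((n : ℝ) - 2)) with ha
  set b : ℝ := 2 / ((n : ℝ) * ((n : ℝ) - 2)) * nA2 with hb
  -- traces
  have hδtr : (∑ i : Fin n, δ i i) = (n : ℝ) := by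
    simp [δ]
  have htrA2 : (∑ i : Fin n, A2 i i) = nA2 := by
    simp only [A2, nA2]
    rw [Finset.sum_comm]
    refine Finset.sum_congr rfl fun i _ => Finset.sum_congr rfl fun p _ => ?_
    rw [hsym p i]; ring
  have hA2δ : (∑ i : Fin n, ∑ j : Fin n, A2 i j * δ i j) = nA2 := by
    rw [← htrA2]
    refine Finset.sum_congr rfl fun i _ => ?_
    simp [δ]
  have hδδ : (∑ i : Fin n, ∑ j : Fin n, δ i j * δ i j) = (n : ℝ) := by
    simp [δ]
  have hQ : (∑ i : Fin n, ∑ j : Fin n, A2 i j * A2 i j)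
      = ∑ i, ∑ k, (A2 i k) ^ 2 := by
    refine Finset.sum_congr rfl fun i _ => Finset.sum_congr rfl fun j _ => ?_
    ring
  -- expand the square
  have expand : ∑ i, ∑ j, ∑ p, ∑ q, (V i j p q) ^ 2
      = a^2 * (∑ i, ∑ j, ∑ p, ∑ q, KN A2 δ i j p q * KN A2 δ i j p q)
        + (2*a*b) * (∑ i, ∑ j, ∑ p, ∑ q, KN A2 δ i j p q * KN δ δ i j p q)
        + b^2 * (∑ i, ∑ j, ∑ p, ∑ q, KN δ δ i j p q * KN δ δ i j p q) := by
    simp only [Finset.mul_sum, ← Finset.sum_add_distrib]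
    refine Finset.sum_congr rfl fun i _ => Finset.sum_congr rfl fun j _ =>
      Finset.sum_congr rfl fun p _ => Finset.sum_congr rfl fun q _ => ?_
    simp only [V]
    ring
  have e1 := knδ_inner n A2 A2
  have e2 := knδ_inner n A2 δ
  have e3 := knδ_inner n δ δ
  simp only [KN, δ] at expand ⊢
  simp only [δ] at e1 e2 e3 hA2δ hδδ hδtr
  rw [expand, e1, e2, e3, hA2δ, hδδ, hδtr, htrA2, hQ]
  have hmul : (n:ℝ) * ((n:ℝ) - 2) ≠ 0 := mul_ne_zero hn0 hn2
  rw [ha, hb]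
  set Q : ℝ := ∑ i, ∑ k, (A2 i k) ^ 2
  field_simp
  ring
end

section
/- Let A be an n×n real symmetric trace-free matrix (n ≥ 3), and write A ⊙ A = T + V' + U' with U'_{ijkl} = -(1/(n(n-1)))‖A‖²(g⊙g)_{ijkl}, V'_{ijkl} = -(2/(n-2))(A²⊙g)_{ijkl} + (2/(n(n-2)))‖A‖²(g⊙g)_{ijkl}, and T := A⊙A - V' - U'. Then |T|² + (n/2)|V'|² = (8(n-2)/(n-1))‖A‖⁴. -/
open Finset

private lemma sq_zero : (0:ℝ)^2 = 0 := by norm_num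

private lemma LG (n : ℕ) :
    ∑ i : Fin n, ∑ j : Fin n, ∑ p : Fin n, ∑ q : Fin n,
      ((if i = p then (1:ℝ) else 0) * (if j = q then (1:ℝ) else 0)
       - (if i = q then (1:ℝ) else 0) * (if j = p then (1:ℝ) else 0)
       + (if j = q then (1:ℝ) else 0) * (if i = p then (1:ℝ) else 0)
       - (if j = p then (1:ℝ) else 0) * (if i = q then (1:ℝ) else 0))^2
    = 8*(n:ℝ)^2 - 8*(n:ℝ) := by
  ring_nf
  simp [mul_ite, ite_mul, Finset.sum_ite_eq, Finset.sum_ite_eq', Finset.sum_ite_irrel,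
    Finset.sum_add_distrib, Finset.sum_sub_distrib, Finset.sum_neg_distrib, Finset.card_univ]
  ring

private lemma LWG (n : ℕ) (A : Fin n → Fin n → ℝ)
    (hsym : ∀ i j, A i j = A j i) (htr : ∑ i, A i i = 0) :
    ∑ i : Fin n, ∑ j : Fin n, ∑ p : Fin n, ∑ q : Fin n,
      ((A i p * A j q - A i q * A j p + A j q * A i p - A j p * A i q) *
       ((if i = p then (1:ℝ) else 0) * (if j = q then (1:ℝ) else 0)
       - (if i = q then (1:ℝ) else 0) * (if j = p then (1:ℝ) else 0)
       + (if j = q then (1:ℝ) else 0) * (if i = p then (1:ℝ) else 0)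
       - (if j = p then (1:ℝ) else 0) * (if i = q then (1:ℝ) else 0)))
    = -8 * (∑ i, ∑ j, (A i j)^2) := by
  have e1 : ∑ x : Fin n, ∑ y : Fin n, A x x * A y y = 0 := by
    simp only [← Finset.mul_sum, ← Finset.sum_mul, htr, zero_mul]
  have e2 : ∑ x : Fin n, ∑ y : Fin n, A x y * A y x = ∑ x : Fin n, ∑ y : Fin n, A x y ^ 2 := by
    refine Finset.sum_congr rfl fun x _ => Finset.sum_congr rfl fun y _ => ?_
    rw [hsym y x]; ring
  ring_nf
  simp only [mul_ite, ite_mul, one_mul, mul_one, zero_mul, mul_zero, Finset.sum_const_zero,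
    sq_zero, ite_self, ite_pow, one_pow,
    Finset.sum_ite_eq, Finset.sum_ite_eq', Finset.sum_ite_irrel,
    Finset.sum_add_distrib, Finset.sum_sub_distrib, Finset.sum_neg_distrib,
    Finset.mem_univ, if_true, ← Finset.sum_mul]
  rw [e1, e2]; ring

private lemma LHG (n : ℕ) (B : Fin n → Fin n → ℝ) :
    ∑ i : Fin n, ∑ j : Fin n, ∑ p : Fin n, ∑ q : Fin n,
      ((B i p * (if j = q then (1:ℝ) else 0) - B i q * (if j = p then (1:ℝ) else 0)
       + B j q * (if i = p then (1:ℝ) else 0) - B j p * (if i = q then (1:ℝ) else 0)) *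
       ((if i = p then (1:ℝ) else 0) * (if j = q then (1:ℝ) else 0)
       - (if i = q then (1:ℝ) else 0) * (if j = p then (1:ℝ) else 0)
       + (if j = q then (1:ℝ) else 0) * (if i = p then (1:ℝ) else 0)
       - (if j = p then (1:ℝ) else 0) * (if i = q then (1:ℝ) else 0)))
    = 8*(n:ℝ)*(∑ i, B i i) - 8*(∑ i, B i i) := by
  ring_nf
  simp only [mul_ite, ite_mul, one_mul, mul_one, zero_mul, mul_zero, Finset.sum_const_zero,
    sq_zero, ite_self, ite_pow, one_pow,
    Finset.sum_ite_eq, Finset.sum_ite_eq', Finset.sum_ite_irrel,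
    Finset.sum_add_distrib, Finset.sum_sub_distrib, Finset.sum_neg_distrib,
    Finset.mem_univ, if_true, ← Finset.sum_mul, ← Finset.mul_sum, Finset.sum_const,
    Finset.card_univ, Fintype.card_fin, nsmul_eq_mul]
  ring

private lemma LH (n : ℕ) (B : Fin n → Fin n → ℝ) (hsymB : ∀ i j, B i j = B j i) :
    ∑ i : Fin n, ∑ j : Fin n, ∑ p : Fin n, ∑ q : Fin n,
      (B i p * (if j = q then (1:ℝ) else 0) - B i q * (if j = p then (1:ℝ) else 0)
       + B j q * (if i = p then (1:ℝ) else 0) - B j p * (if i = q then (1:ℝ) else 0))^2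
    = (4*(n:ℝ) - 8) * (∑ i, ∑ j, (B i j)^2) + 4 * (∑ i, B i i)^2 := by
  have hq1 : ∑ i : Fin n, ∑ j : Fin n, B i j * B i j = ∑ i : Fin n, ∑ j : Fin n, B i j ^ 2 := by
    refine Finset.sum_congr rfl fun i _ => Finset.sum_congr rfl fun j _ => by ring
  have hq2 : ∑ i : Fin n, ∑ j : Fin n, B j i * B j i = ∑ i : Fin n, ∑ j : Fin n, B i j ^ 2 := by
    rw [← hq1]
    exact Finset.sum_congr rfl fun i _ => Finset.sum_congr rfl fun j _ => by rw [hsymB j i]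
  ring_nf
  simp only [mul_ite, ite_mul, one_mul, mul_one, zero_mul, mul_zero, Finset.sum_const_zero,
    sq_zero, ite_self, ite_pow, one_pow,
    Finset.sum_ite_eq, Finset.sum_ite_eq', Finset.sum_ite_irrel,
    Finset.sum_add_distrib, Finset.sum_sub_distrib, Finset.sum_neg_distrib,
    Finset.mem_univ, if_true, ← Finset.sum_mul, ← Finset.mul_sum, Finset.sum_const,
    Finset.card_univ, Fintype.card_fin, nsmul_eq_mul]
  rw [hq1, hq2]
  ring

private lemma sum3_rot {n : ℕ} (g : Fin n → Fin n → Fin n → ℝ) :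
    ∑ a, ∑ b, ∑ c, g a b c = ∑ b, ∑ c, ∑ a, g a b c := by
  rw [Finset.sum_comm]
  exact Finset.sum_congr rfl fun b _ => Finset.sum_comm

private lemma LW (n : ℕ) (A : Fin n → Fin n → ℝ) :
    ∑ i : Fin n, ∑ j : Fin n, ∑ p : Fin n, ∑ q : Fin n,
      (A i p * A j q - A i q * A j p + A j q * A i p - A j p * A i q)^2
    = 8 * (∑ i, ∑ j, (A i j)^2)^2 - 8 * (∑ i : Fin n, ∑ j : Fin n, (∑ p, A i p * A j p)^2) := by
  have step1 : ∀ i j : Fin n,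
      ∑ p : Fin n, ∑ q : Fin n, (A i p * A j q - A i q * A j p + A j q * A i p - A j p * A i q)^2
      = 8 * (∑ p, A i p ^2) * (∑ q, A j q ^2) - 8 * (∑ p, A i p * A j p)^2 := by
    intro i j
    have inner : ∀ p : Fin n,
        ∑ q : Fin n, (A i p * A j q - A i q * A j p + A j q * A i p - A j p * A i q)^2
        = (4 * A i p ^2) * (∑ q, A j q ^2) + (4 * A j p ^2) * (∑ q, A i q ^2)
          - (8 * (A i p * A j p)) * (∑ q, A i q * A j q) := by
      intro p
      rw [Finset.mul_sum, Finset.mul_sum, Finset.mul_sum, ← Finset.sum_add_distrib,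
        ← Finset.sum_sub_distrib]
      exact Finset.sum_congr rfl fun q _ => by ring
    rw [Finset.sum_congr rfl fun p _ => inner p]
    simp only [Finset.sum_add_distrib, Finset.sum_sub_distrib, ← Finset.sum_mul, ← Finset.mul_sum]
    ring
  rw [Finset.sum_congr rfl fun i (_ : i ∈ univ) =>
    Finset.sum_congr rfl fun j (_ : j ∈ univ) => step1 i j]
  simp only [Finset.sum_sub_distrib, ← Finset.sum_mul, ← Finset.mul_sum]
  ring

private lemma LWH (n : ℕ) (A B : Fin n → Fin n → ℝ) (hsym : ∀ i j, A i j = A j i)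
    (htr : ∑ i, A i i = 0) (hB : ∀ i k, B i k = ∑ p, A i p * A p k) :
    ∑ i : Fin n, ∑ j : Fin n, ∑ p : Fin n, ∑ q : Fin n,
      ((A i p * A j q - A i q * A j p + A j q * A i p - A j p * A i q) *
       (B i p * (if j = q then (1:ℝ) else 0) - B i q * (if j = p then (1:ℝ) else 0)
       + B j q * (if i = p then (1:ℝ) else 0) - B j p * (if i = q then (1:ℝ) else 0)))
    = -8 * (∑ i, ∑ j, (B i j)^2) := by
  have e_t1 : ∑ i : Fin n, ∑ i_1 : Fin n, ∑ i_2 : Fin n, A i i_2 * A i_1 i_1 * B i i_2 = 0 := by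
    have h : ∀ i : Fin n, ∑ i_1 : Fin n, ∑ i_2 : Fin n, A i i_2 * A i_1 i_1 * B i i_2 = 0 := by
      intro i
      have h2 : ∑ i_1 : Fin n, ∑ i_2 : Fin n, A i i_2 * A i_1 i_1 * B i i_2
          = ∑ i_1 : Fin n, A i_1 i_1 * (∑ i_2 : Fin n, A i i_2 * B i i_2) := by
        refine Finset.sum_congr rfl fun i1 _ => ?_
        rw [Finset.mul_sum]; exact Finset.sum_congr rfl fun i2 _ => by ring
      rw [h2, ← Finset.sum_mul, htr, zero_mul]
    rw [Finset.sum_congr rfl fun i (_ : i ∈ univ) => h i, Finset.sum_const_zero]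
  have e_t3 : ∑ i : Fin n, ∑ i_1 : Fin n, ∑ i_2 : Fin n, A i i * A i_1 i_2 * B i_1 i_2 = 0 := by
    have h : ∀ i : Fin n, ∑ i_1 : Fin n, ∑ i_2 : Fin n, A i i * A i_1 i_2 * B i_1 i_2
        = A i i * ∑ i_1 : Fin n, ∑ i_2 : Fin n, A i_1 i_2 * B i_1 i_2 := by
      intro i
      rw [Finset.mul_sum]
      refine Finset.sum_congr rfl fun i1 _ => ?_
      rw [Finset.mul_sum]; exact Finset.sum_congr rfl fun i2 _ => by ring
    rw [Finset.sum_congr rfl fun i (_ : i ∈ univ) => h i, ← Finset.sum_mul, htr, zero_mul]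
  have e_t2 : ∑ i : Fin n, ∑ i_1 : Fin n, ∑ i_2 : Fin n, A i i_1 * A i_1 i_2 * B i i_2
      = ∑ i : Fin n, ∑ j : Fin n, B i j ^ 2 := by
    refine Finset.sum_congr rfl fun i _ => ?_
    rw [Finset.sum_comm]
    refine Finset.sum_congr rfl fun i2 _ => ?_
    rw [← Finset.sum_mul, ← hB i i2]; ring
  have e_t4 : ∑ i : Fin n, ∑ i_1 : Fin n, ∑ i_2 : Fin n, A i i_2 * A i_1 i * B i_1 i_2
      = ∑ i : Fin n, ∑ j : Fin n, B i j ^ 2 := by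
    rw [sum3_rot]
    refine Finset.sum_congr rfl fun i1 _ => Finset.sum_congr rfl fun i2 _ => ?_
    rw [← Finset.sum_mul,
      show (∑ i : Fin n, A i i2 * A i1 i) = ∑ i : Fin n, A i1 i * A i i2 from
        Finset.sum_congr rfl fun i _ => mul_comm _ _,
      ← hB i1 i2]
    ring
  ring_nf
  simp only [mul_ite, ite_mul, one_mul, mul_one, zero_mul, mul_zero, Finset.sum_const_zero,
    ite_self, ite_pow, one_pow,
    Finset.sum_ite_eq, Finset.sum_ite_eq', Finset.sum_ite_irrel,
    Finset.sum_add_distrib, Finset.sum_sub_distrib, Finset.sum_neg_distrib,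
    Finset.mem_univ, if_true, ← Finset.sum_mul, ← Finset.mul_sum]
  rw [e_t1, e_t2, e_t3, e_t4]
  ring

private lemma key (n : ℕ) (hn : 3 ≤ n) (A B D : Fin n → Fin n → ℝ)
    (V T : Fin n → Fin n → Fin n → Fin n → ℝ) (s : ℝ)
    (hsym : ∀ i j, A i j = A j i) (htr : ∑ i, A i i = 0)
    (hB : ∀ i k, B i k = ∑ p, A i p * A p k)
    (hD : ∀ i j, D i j = if i = j then (1:ℝ) else 0)
    (hs : s = ∑ i, ∑ j, (A i j)^2)
    (hV : ∀ i j p q, V i j p q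
      = -(2 / ((n : ℝ) - 2)) * (B i p * D j q - B i q * D j p + B j q * D i p - B j p * D i q)
        + (2 / ((n : ℝ) * ((n : ℝ) - 2))) * s *
          (D i p * D j q - D i q * D j p + D j q * D i p - D j p * D i q))
    (hT : ∀ i j p q, T i j p q
      = (A i p * A j q - A i q * A j p + A j q * A i p - A j p * A i q) - V i j p q
        - (-(1 / ((n : ℝ) * ((n : ℝ) - 1))) * s *
          (D i p * D j q - D i q * D j p + D j q * D i p - D j p * D i q))) :
    (∑ i, ∑ j, ∑ p, ∑ q, (T i j p q) ^ 2)
      + ((n : ℝ) / 2) * (∑ i, ∑ j, ∑ p, ∑ q, (V i j p q) ^ 2)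
      = (8 * ((n : ℝ) - 2) / ((n : ℝ) - 1)) * s ^ 2 := by
  have hsymB : ∀ i j, B i j = B j i := by
    intro i j; rw [hB, hB]
    exact Finset.sum_congr rfl fun p _ => by rw [hsym j p, hsym p i]; ring
  have htrB : ∑ i, B i i = ∑ i, ∑ j, (A i j)^2 := by
    refine Finset.sum_congr rfl fun i _ => ?_
    rw [hB]
    exact Finset.sum_congr rfl fun p _ => by rw [hsym p i]; ring
  have hCB : ∑ i : Fin n, ∑ j : Fin n, (∑ p, A i p * A j p)^2
      = ∑ i : Fin n, ∑ j : Fin n, (B i j)^2 := by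
    refine Finset.sum_congr rfl fun i _ => Finset.sum_congr rfl fun j _ => ?_
    rw [hB i j]
    congr 1
    exact Finset.sum_congr rfl fun p _ => by rw [hsym j p]
  have hTpt : ∀ i j p q : Fin n, (T i j p q)^2
      = (1:ℝ) * ((A i p * A j q - A i q * A j p + A j q * A i p - A j p * A i q)^2)
        + ((2/((n:ℝ)-2))^2) * ((B i p * (if j = q then (1:ℝ) else 0) - B i q * (if j = p then (1:ℝ) else 0)
            + B j q * (if i = p then (1:ℝ) else 0) - B j p * (if i = q then (1:ℝ) else 0))^2)
        + ((s*(1/((n:ℝ)*((n:ℝ)-1)) - 2/((n:ℝ)*((n:ℝ)-2))))^2) *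
            (((if i = p then (1:ℝ) else 0) * (if j = q then (1:ℝ) else 0)
            - (if i = q then (1:ℝ) else 0) * (if j = p then (1:ℝ) else 0)
            + (if j = q then (1:ℝ) else 0) * (if i = p then (1:ℝ) else 0)
            - (if j = p then (1:ℝ) else 0) * (if i = q then (1:ℝ) else 0))^2)
        + (2*(2/((n:ℝ)-2))) * ((A i p * A j q - A i q * A j p + A j q * A i p - A j p * A i q) *
            (B i p * (if j = q then (1:ℝ) else 0) - B i q * (if j = p then (1:ℝ) else 0)
            + B j q * (if i = p then (1:ℝ) else 0) - B j p * (if i = q then (1:ℝ) else 0)))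
        + (2*(s*(1/((n:ℝ)*((n:ℝ)-1)) - 2/((n:ℝ)*((n:ℝ)-2))))) *
            ((A i p * A j q - A i q * A j p + A j q * A i p - A j p * A i q) *
            ((if i = p then (1:ℝ) else 0) * (if j = q then (1:ℝ) else 0)
            - (if i = q then (1:ℝ) else 0) * (if j = p then (1:ℝ) else 0)
            + (if j = q then (1:ℝ) else 0) * (if i = p then (1:ℝ) else 0)
            - (if j = p then (1:ℝ) else 0) * (if i = q then (1:ℝ) else 0)))
        + (2*(2/((n:ℝ)-2))*(s*(1/((n:ℝ)*((n:ℝ)-1)) - 2/((n:ℝ)*((n:ℝ)-2))))) *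
            ((B i p * (if j = q then (1:ℝ) else 0) - B i q * (if j = p then (1:ℝ) else 0)
            + B j q * (if i = p then (1:ℝ) else 0) - B j p * (if i = q then (1:ℝ) else 0)) *
            ((if i = p then (1:ℝ) else 0) * (if j = q then (1:ℝ) else 0)
            - (if i = q then (1:ℝ) else 0) * (if j = p then (1:ℝ) else 0)
            + (if j = q then (1:ℝ) else 0) * (if i = p then (1:ℝ) else 0)
            - (if j = p then (1:ℝ) else 0) * (if i = q then (1:ℝ) else 0))) := by
    intro i j p q
    rw [hT, hV]
    simp only [hD]
    ring
  have hVpt : ∀ i j p q : Fin n, (V i j p q)^2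
      = ((2/((n:ℝ)-2))^2) * ((B i p * (if j = q then (1:ℝ) else 0) - B i q * (if j = p then (1:ℝ) else 0)
            + B j q * (if i = p then (1:ℝ) else 0) - B j p * (if i = q then (1:ℝ) else 0))^2)
        + ((2*s/((n:ℝ)*((n:ℝ)-2)))^2) *
            (((if i = p then (1:ℝ) else 0) * (if j = q then (1:ℝ) else 0)
            - (if i = q then (1:ℝ) else 0) * (if j = p then (1:ℝ) else 0)
            + (if j = q then (1:ℝ) else 0) * (if i = p then (1:ℝ) else 0)
            - (if j = p then (1:ℝ) else 0) * (if i = q then (1:ℝ) else 0))^2)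
        + (-2*(2/((n:ℝ)-2))*(2*s/((n:ℝ)*((n:ℝ)-2)))) *
            ((B i p * (if j = q then (1:ℝ) else 0) - B i q * (if j = p then (1:ℝ) else 0)
            + B j q * (if i = p then (1:ℝ) else 0) - B j p * (if i = q then (1:ℝ) else 0)) *
            ((if i = p then (1:ℝ) else 0) * (if j = q then (1:ℝ) else 0)
            - (if i = q then (1:ℝ) else 0) * (if j = p then (1:ℝ) else 0)
            + (if j = q then (1:ℝ) else 0) * (if i = p then (1:ℝ) else 0)
            - (if j = p then (1:ℝ) else 0) * (if i = q then (1:ℝ) else 0))) := by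
    intro i j p q
    rw [hV]
    simp only [hD]
    ring
  rw [Finset.sum_congr rfl fun i (_ : i ∈ univ) => Finset.sum_congr rfl fun j (_ : j ∈ univ) =>
      Finset.sum_congr rfl fun p (_ : p ∈ univ) => Finset.sum_congr rfl fun q (_ : q ∈ univ) =>
      hTpt i j p q,
    Finset.sum_congr rfl fun i (_ : i ∈ univ) => Finset.sum_congr rfl fun j (_ : j ∈ univ) =>
      Finset.sum_congr rfl fun p (_ : p ∈ univ) => Finset.sum_congr rfl fun q (_ : q ∈ univ) =>
      hVpt i j p q]
  simp only [Finset.sum_add_distrib, ← Finset.mul_sum]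
  rw [LW n A, hCB]
  simp only [LH n B hsymB, LG n, LWH n A B hsym htr hB, LWG n A hsym htr, LHG n B, htrB, ← hs]
  have h3 : (3:ℝ) ≤ (n:ℝ) := by exact_mod_cast hn
  have h0 : (n:ℝ) ≠ 0 := by linarith
  have h1 : (n:ℝ) - 1 ≠ 0 := by intro h; nlinarith
  have h2 : (n:ℝ) - 2 ≠ 0 := by intro h; nlinarith
  field_simp
  ring

theorem stmt_5 (n : ℕ) (hn : 3 ≤ n) (A : Fin n → Fin n → ℝ)
    (hsym : ∀ i j, A i j = A j i) (htr : ∑ i, A i i = 0) :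
    let δ : Fin n → Fin n → ℝ := fun i j => if i = j then 1 else 0
    let A2 : Fin n → Fin n → ℝ := fun i k => ∑ p, A i p * A p k
    let KN : (Fin n → Fin n → ℝ) → (Fin n → Fin n → ℝ) → Fin n → Fin n → Fin n → Fin n → ℝ :=
      fun h k i j p q => h i p * k j q - h i q * k j p + h j q * k i p - h j p * k i q
    let nA2 : ℝ := ∑ i, ∑ j, (A i j) ^ 2
    let U : Fin n → Fin n → Fin n → Fin n → ℝ := fun i j p q =>
      -(1 / ((n : ℝ) * ((n : ℝ) - 1))) * nA2 * KN δ δ i j p q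
    let V : Fin n → Fin n → Fin n → Fin n → ℝ := fun i j p q =>
      -(2 / ((n : ℝ) - 2)) * KN A2 δ i j p q + (2 / ((n : ℝ) * ((n : ℝ) - 2))) * nA2 * KN δ δ i j p q
    let T : Fin n → Fin n → Fin n → Fin n → ℝ := fun i j p q =>
      KN A A i j p q - V i j p q - U i j p q
    (∑ i, ∑ j, ∑ p, ∑ q, (T i j p q) ^ 2)
      + ((n : ℝ) / 2) * (∑ i, ∑ j, ∑ p, ∑ q, (V i j p q) ^ 2)
      = (8 * ((n : ℝ) - 2) / ((n : ℝ) - 1)) * nA2 ^ 2 := by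
  intro δ A2 KN nA2 U V T
  exact key n hn A A2 δ V T nA2 hsym htr (fun _ _ => rfl) (fun _ _ => rfl) rfl
    (fun _ _ _ _ => rfl) (fun _ _ _ _ => rfl)
end

section
/- For an n×n real symmetric matrix A with trace zero and g the identity matrix, tr(A³) = Σ_{i,j,k} A_{ij}A_{jk}A_{ki} = -(1/8)·Σ_{i,j,k,l} (A ⊙ g)_{ijkl}(A ⊙ A)_{ijkl}, where ⊙ is the Kulkarni–Nomizu product. -/
open Finset

lemma pull_if' {α : Type*} {P : Prop} [Decidable P] (s : Finset α) (f : α → ℝ) :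
    ∑ x ∈ s, (if P then f x else 0) = if P then ∑ x ∈ s, f x else 0 := by
  split <;> simp

theorem stmt_7 (n : ℕ) (A : Fin n → Fin n → ℝ)
    (hsym : ∀ i j, A i j = A j i) (htr : ∑ i, A i i = 0) :
    let δ : Fin n → Fin n → ℝ := fun i j => if i = j then 1 else 0
    let AKg : Fin n → Fin n → Fin n → Fin n → ℝ := fun i j k l =>
      A i k * δ j l - A i l * δ j k + A j l * δ i k - A j k * δ i l
    let AKA : Fin n → Fin n → Fin n → Fin n → ℝ := fun i j k l =>
      2 * (A i k * A j l - A i l * A j k)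
    ∑ i, ∑ j, ∑ k, A i j * A j k * A k i
      = -(1 / 8) * ∑ i, ∑ j, ∑ k, ∑ l, AKg i j k l * AKA i j k l := by
  intro δ AKg AKA
  have h : ∀ i j k l : Fin n, AKg i j k l * AKA i j k l
      = (if j = l then (1:ℝ) else 0) * (2*(A i k * A i k * A j l - A i k * A i l * A j k))
        - (if j = k then (1:ℝ) else 0) * (2*(A i l * A i k * A j l - A i l * A i l * A j k))
        + (if i = k then (1:ℝ) else 0) * (2*(A j l * A i k * A j l - A j l * A i l * A j k))
        - (if i = l then (1:ℝ) else 0) * (2*(A j k * A i k * A j l - A j k * A i l * A j k)) := by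
    intro i j k l; simp only [AKg, AKA, δ]; ring
  simp only [h]
  simp only [Finset.sum_sub_distrib, Finset.sum_add_distrib, ite_mul, one_mul, zero_mul,
    pull_if', Finset.sum_ite_eq, Finset.sum_ite_eq', Finset.mem_univ, if_true]
  simp only [mul_sub, Finset.sum_sub_distrib, ← Finset.mul_sum]
  have ha : ∑ x : Fin n, ∑ y : Fin n, ∑ k : Fin n, A x k * A x k * A y y = 0 := by
    have hx : ∀ x : Fin n, ∑ y : Fin n, ∑ k : Fin n, A x k * A x k * A y y = 0 := by
      intro x
      rw [Finset.sum_comm]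
      have h2 : ∀ k : Fin n, ∑ y : Fin n, A x k * A x k * A y y
          = A x k * A x k * ∑ y, A y y := by intro k; rw [Finset.mul_sum]
      simp [h2, htr]
    simp [hx]
  have hc : ∑ x : Fin n, ∑ y : Fin n, ∑ k : Fin n, A y k * A x x * A y k = 0 := by
    have hx : ∀ x : Fin n, ∑ y : Fin n, ∑ k : Fin n, A y k * A x x * A y k
        = A x x * ∑ y : Fin n, ∑ k : Fin n, A y k * A y k := by
      intro x
      rw [Finset.mul_sum]
      refine Finset.sum_congr rfl fun y _ => ?_
      rw [Finset.mul_sum]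
      exact Finset.sum_congr rfl fun k _ => by ring
    simp only [hx]
    rw [← Finset.sum_mul, htr, zero_mul]
  have hb : ∑ x : Fin n, ∑ y : Fin n, ∑ k : Fin n, A x k * A x y * A y k
      = ∑ i, ∑ j, ∑ k, A i j * A j k * A k i := by
    refine Finset.sum_congr rfl fun i _ => Finset.sum_congr rfl fun j _ =>
      Finset.sum_congr rfl fun k _ => ?_
    rw [hsym k i]; ring
  have hd : ∑ x : Fin n, ∑ y : Fin n, ∑ k : Fin n, A y k * A x k * A y x
      = ∑ i, ∑ j, ∑ k, A i j * A j k * A k i := by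
    refine Finset.sum_congr rfl fun i _ => Finset.sum_congr rfl fun j _ =>
      Finset.sum_congr rfl fun k _ => ?_
    rw [hsym k i, hsym j i, hsym j k]; ring
  rw [ha, hb, hc, hd]
  ring
end

section
/- (Pointwise algebraic estimate, Lemma 2.3) Let n ≥ 3, let A be an n×n real symmetric trace-free matrix, and let W be a (0,4)-tensor with the symmetries of the Weyl tensor and all traces zero (Σᵢ W_{ijil} = 0 for all j,l). Then |−Σ W_{ijkl}A_{ik}A_{jl} + (n/(2(n−2)))·tr(A³)| ≤ √((n−2)/(2(n−1)))·‖A‖²·(|W|² + (n/(2(n−2)))‖A‖²)^{1/2}. -/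
/-!
Let `R = ¼ A ⊙ A` be the Kulkarni–Nomizu square of `A`, i.e. `R_{ijkl} = ½(A_ik A_jl − A_il A_jk)`,
and `V` its Weyl part. A tensor that is skew in both index pairs is orthogonal to every `h ⊙ g`
as soon as its Ricci contraction vanishes, so `∑ W_{ijkl} A_ik A_jl = ⟨W, R⟩ = ⟨W, V⟩ ≤ |W| |V|`,
and likewise `|V|² = ⟨V, R⟩ = (n-2)/(2(n-1)) ‖A‖⁴ − n/(2(n-2)) |B|²`, where `B` is the trace-free
part of `A²`. On the other hand `tr A³ = ⟨A, B⟩ ≤ ‖A‖ |B|` because `tr A = 0`. Cauchy–Schwarz in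
`ℝ²` combines the two bounds, and the `|B|²` terms cancel.
-/

open Finset Matrix

lemma abs_add_le_sqrt_mul_sqrt {u v p q r s : ℝ} (hp : 0 ≤ p) (hq : 0 ≤ q) (hr : 0 ≤ r)
    (hs : 0 ≤ s) (hu : u ^ 2 ≤ p * q) (hv : v ^ 2 ≤ r * s) :
    |u + v| ≤ √(p + r) * √(q + s) := by
  rw [← Real.sqrt_mul (by positivity)]
  apply Real.abs_le_sqrt
  have huv : (u * v) ^ 2 ≤ (p * s) * (r * q) := by
    rw [mul_pow]; nlinarith [sq_nonneg u, sq_nonneg v]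
  have amgm : (2 * (u * v)) ^ 2 ≤ (p * s + r * q) ^ 2 := by
    nlinarith [sq_nonneg (p * s - r * q)]
  have := (abs_le_of_sq_le_sq' amgm (by positivity)).2
  nlinarith

namespace AlgebraicCurvature

variable {ι : Type*}

structure IsSkew (R : ι → ι → ι → ι → ℝ) : Prop where
  swap_left : ∀ i j k l, R j i k l = -R i j k l
  swap_right : ∀ i j k l, R i j l k = -R i j k l

lemma IsSkew.swap_swap {R : ι → ι → ι → ι → ℝ} (hR : IsSkew R) (i j k l : ι) :
    R j i l k = R i j k l := by
  rw [hR.swap_left, hR.swap_right, neg_neg]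

lemma IsSkew.smul {R : ι → ι → ι → ι → ℝ} (hR : IsSkew R) (c : ℝ) : IsSkew (c • R) :=
  ⟨fun i j k l => by simp [hR.swap_left i j k l], fun i j k l => by simp [hR.swap_right i j k l]⟩

def kulkarniNomizu (h g : Matrix ι ι ℝ) (i j k l : ι) : ℝ :=
  h i k * g j l + h j l * g i k - h i l * g j k - h j k * g i l

lemma isSkew_kulkarniNomizu (h g : Matrix ι ι ℝ) : IsSkew (kulkarniNomizu h g) :=
  ⟨fun _ _ _ _ => by simp only [kulkarniNomizu]; ring,
    fun _ _ _ _ => by simp only [kulkarniNomizu]; ring⟩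

variable [Fintype ι]

lemma cast_card_sub_ne_zero (hn : 2 < Fintype.card ι) {x : ℝ} (hx : x ≤ 2) :
    (Fintype.card ι : ℝ) - x ≠ 0 :=
  sub_ne_zero.2 (ne_of_gt (hx.trans_lt (by exact_mod_cast hn)))

def tensorInner (U V : ι → ι → ι → ι → ℝ) : ℝ :=
  ∑ i, ∑ j, ∑ k, ∑ l, U i j k l * V i j k l

lemma tensorInner_comm (U V : ι → ι → ι → ι → ℝ) : tensorInner U V = tensorInner V U := by
  simp only [tensorInner, mul_comm]

lemma tensorInner_smul_right (c : ℝ) (U V : ι → ι → ι → ι → ℝ) :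
    tensorInner U (c • V) = c * tensorInner U V := by
  simp only [tensorInner, Pi.smul_apply, smul_eq_mul, mul_sum, mul_left_comm]

lemma tensorInner_self_nonneg (U : ι → ι → ι → ι → ℝ) : 0 ≤ tensorInner U U :=
  sum_nonneg fun _ _ => sum_nonneg fun _ _ => sum_nonneg fun _ _ =>
    sum_nonneg fun _ _ => mul_self_nonneg _

lemma tensorInner_sq_le (U V : ι → ι → ι → ι → ℝ) :
    tensorInner U V ^ 2 ≤ tensorInner U U * tensorInner V V := by
  simpa [tensorInner, Fintype.sum_prod_type, pow_two] using
    sum_mul_sq_le_sq_mul_sq univ (fun p : ι × ι × ι × ι => U p.1 p.2.1 p.2.2.1 p.2.2.2)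
      (fun p => V p.1 p.2.1 p.2.2.1 p.2.2.2)

lemma IsSkew.tensorInner_kulkarniNomizu {R : ι → ι → ι → ι → ℝ} (hR : IsSkew R)
    (h g : Matrix ι ι ℝ) :
    tensorInner R (kulkarniNomizu h g) = 4 * ∑ i, ∑ j, ∑ k, ∑ l, R i j k l * h i k * g j l := by
  have swap_ij_kl : ∑ i, ∑ j, ∑ k, ∑ l, R i j k l * h j l * g i k
      = ∑ i, ∑ j, ∑ k, ∑ l, R i j k l * h i k * g j l := by
    rw [sum_comm]
    refine sum_congr rfl fun j _ => sum_congr rfl fun i _ => ?_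
    rw [sum_comm]
    refine sum_congr rfl fun l _ => sum_congr rfl fun k _ => ?_
    rw [hR.swap_swap]
  have swap_kl : ∑ i, ∑ j, ∑ k, ∑ l, R i j k l * h i l * g j k
      = -∑ i, ∑ j, ∑ k, ∑ l, R i j k l * h i k * g j l := by
    simp only [← sum_neg_distrib]
    refine sum_congr rfl fun i _ => sum_congr rfl fun j _ => ?_
    rw [sum_comm]
    refine sum_congr rfl fun l _ => sum_congr rfl fun k _ => ?_
    rw [hR.swap_right]
    ring
  have swap_ij : ∑ i, ∑ j, ∑ k, ∑ l, R i j k l * h j k * g i l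
      = -∑ i, ∑ j, ∑ k, ∑ l, R i j k l * h i k * g j l := by
    simp only [← sum_neg_distrib]
    rw [sum_comm]
    refine sum_congr rfl fun j _ => sum_congr rfl fun i _ => ?_
    refine sum_congr rfl fun k _ => sum_congr rfl fun l _ => ?_
    rw [hR.swap_left]
    ring
  simp only [tensorInner, kulkarniNomizu, mul_add, mul_sub, sum_add_distrib, sum_sub_distrib,
    ← mul_assoc, swap_ij_kl, swap_kl, swap_ij]
  ring

def ricci : (ι → ι → ι → ι → ℝ) →ₗ[ℝ] Matrix ι ι ℝ where
  toFun R := Matrix.of fun j l => ∑ i, R i j i l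
  map_add' R S := by ext; simp [sum_add_distrib]
  map_smul' c R := by ext; simp [mul_sum]

lemma ricci_apply (R : ι → ι → ι → ι → ℝ) (j l : ι) : ricci R j l = ∑ i, R i j i l := rfl

lemma ricci_kulkarniNomizu (h g : Matrix ι ι ℝ) :
    ricci (kulkarniNomizu h g) = h.trace • g + g.trace • h - g * h - h * g := by
  ext j l
  simp only [ricci_apply, kulkarniNomizu, sum_add_distrib, sum_sub_distrib, Matrix.sub_apply,
    Matrix.add_apply, Matrix.smul_apply, smul_eq_mul, Matrix.mul_apply, trace, Matrix.diag_apply,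
    mul_sum, mul_comm]

section WeylPart

variable [DecidableEq ι]

lemma IsSkew.tensorInner_kulkarniNomizu_one {R : ι → ι → ι → ι → ℝ} (hR : IsSkew R)
    (h : Matrix ι ι ℝ) :
    tensorInner R (kulkarniNomizu h 1) = 4 * ∑ i, ∑ k, h i k * ricci R i k := by
  rw [hR.tensorInner_kulkarniNomizu]
  simp only [one_apply, mul_ite, mul_one, mul_zero, sum_ite_eq, mem_univ, if_true]
  congr 1
  refine sum_congr rfl fun i _ => ?_
  rw [sum_comm]
  refine sum_congr rfl fun k _ => ?_
  rw [ricci_apply, mul_sum]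
  refine sum_congr rfl fun j _ => ?_
  rw [hR.swap_swap i j k j]
  ring

/-- The usual decomposition `R = W + (Ric ⊙ g)/(n-2) - scal (g ⊙ g)/(2(n-1)(n-2))` of a curvature
tensor, solved for its Weyl part `W`. -/
noncomputable def weylPart (R : ι → ι → ι → ι → ℝ) : ι → ι → ι → ι → ℝ :=
  R - (1 / ((Fintype.card ι : ℝ) - 2)) • kulkarniNomizu (ricci R) 1
    + ((ricci R).trace / (2 * ((Fintype.card ι : ℝ) - 1) * ((Fintype.card ι : ℝ) - 2))) •
      kulkarniNomizu 1 1

lemma IsSkew.weylPart {R : ι → ι → ι → ι → ℝ} (hR : IsSkew R) : IsSkew (weylPart R) :=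
  ⟨fun i j k l => by
    simp only [AlgebraicCurvature.weylPart, Pi.add_apply, Pi.sub_apply, Pi.smul_apply,
      smul_eq_mul]
    rw [hR.swap_left, (isSkew_kulkarniNomizu (ricci R) 1).swap_left,
      (isSkew_kulkarniNomizu 1 1).swap_left]
    ring,
   fun i j k l => by
    simp only [AlgebraicCurvature.weylPart, Pi.add_apply, Pi.sub_apply, Pi.smul_apply,
      smul_eq_mul]
    rw [hR.swap_right, (isSkew_kulkarniNomizu (ricci R) 1).swap_right,
      (isSkew_kulkarniNomizu 1 1).swap_right]
    ring⟩

lemma ricci_weylPart (hn : 2 < Fintype.card ι) (R : ι → ι → ι → ι → ℝ) :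
    ricci (weylPart R) = 0 := by
  have h1 := cast_card_sub_ne_zero hn (x := 1) one_le_two
  have h2 := cast_card_sub_ne_zero hn (x := 2) le_rfl
  ext j l
  simp only [weylPart, map_add, map_sub, map_smul, ricci_kulkarniNomizu, trace_one, one_mul,
    mul_one, Matrix.add_apply, Matrix.sub_apply, Matrix.smul_apply, smul_eq_mul, one_apply,
    Matrix.zero_apply]
  field_simp
  split_ifs <;> ring

lemma tensorInner_weylPart (U R : ι → ι → ι → ι → ℝ) :
    tensorInner U (weylPart R) = tensorInner U R
      - 1 / ((Fintype.card ι : ℝ) - 2) * tensorInner U (kulkarniNomizu (ricci R) 1)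
      + (ricci R).trace / (2 * ((Fintype.card ι : ℝ) - 1) * ((Fintype.card ι : ℝ) - 2))
        * tensorInner U (kulkarniNomizu 1 1) := by
  simp only [tensorInner, weylPart, Pi.add_apply, Pi.sub_apply, Pi.smul_apply, smul_eq_mul,
    mul_add, mul_sub, sum_add_distrib, sum_sub_distrib, mul_sum, mul_left_comm]

lemma tensorInner_weylPart_of_ricci_eq_zero {U : ι → ι → ι → ι → ℝ} (hU : IsSkew U)
    (hU0 : ricci U = 0) (R : ι → ι → ι → ι → ℝ) :
    tensorInner U (weylPart R) = tensorInner U R := by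
  simp [tensorInner_weylPart, hU.tensorInner_kulkarniNomizu_one, hU0]

lemma tensorInner_weylPart_self (hn : 2 < Fintype.card ι) {R : ι → ι → ι → ι → ℝ}
    (hR : IsSkew R) :
    tensorInner (weylPart R) (weylPart R) = tensorInner R R
      - 4 / ((Fintype.card ι : ℝ) - 2) * ∑ i, ∑ k, ricci R i k ^ 2
      + 2 * (ricci R).trace ^ 2 / (((Fintype.card ι : ℝ) - 1) * ((Fintype.card ι : ℝ) - 2)) := by
  have h1 := cast_card_sub_ne_zero hn (x := 1) one_le_two
  have h2 := cast_card_sub_ne_zero hn (x := 2) le_rfl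
  rw [tensorInner_weylPart_of_ricci_eq_zero hR.weylPart (ricci_weylPart hn R),
    tensorInner_comm, tensorInner_weylPart, hR.tensorInner_kulkarniNomizu_one,
    hR.tensorInner_kulkarniNomizu_one, trace]
  simp only [one_apply, ite_mul, one_mul, zero_mul, sum_ite_eq, mem_univ, if_true, pow_two,
    diag_apply]
  field_simp
  ring

end WeylPart

lemma _root_.Matrix.IsSymm.trace_mul_self {A : Matrix ι ι ℝ} (hA : A.IsSymm) :
    (A * A).trace = ∑ i, ∑ j, A i j ^ 2 := by
  refine sum_congr rfl fun i _ => ?_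
  simp only [diag_apply, mul_apply, pow_two, hA.apply]

lemma _root_.Matrix.IsSymm.sum_mul_mul_cycle {A : Matrix ι ι ℝ} (hA : A.IsSymm) :
    ∑ i, ∑ j, ∑ k, A i j * A j k * A k i = ∑ i, ∑ j, A i j * (A * A) i j := by
  refine sum_congr rfl fun i _ => sum_congr rfl fun j _ => ?_
  rw [mul_apply, mul_sum]
  refine sum_congr rfl fun k _ => ?_
  rw [hA.apply k j, hA.apply i k]
  ring

lemma sum_sum_mul_sq_le (M N : Matrix ι ι ℝ) :
    (∑ i, ∑ j, M i j * N i j) ^ 2 ≤ (∑ i, ∑ j, M i j ^ 2) * ∑ i, ∑ j, N i j ^ 2 := by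
  simpa [Fintype.sum_prod_type] using
    sum_mul_sq_le_sq_mul_sq univ (fun p : ι × ι => M p.1 p.2) (fun p => N p.1 p.2)

section TracelessPart

variable [DecidableEq ι]

noncomputable def tracelessPart (M : Matrix ι ι ℝ) : Matrix ι ι ℝ :=
  M - (M.trace / Fintype.card ι) • 1

lemma sum_sq_tracelessPart [Nonempty ι] (M : Matrix ι ι ℝ) :
    ∑ i, ∑ j, tracelessPart M i j ^ 2
      = ∑ i, ∑ j, M i j ^ 2 - M.trace ^ 2 / Fintype.card ι := by
  have hn : (Fintype.card ι : ℝ) ≠ 0 := by positivity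
  have expand : ∀ i j, tracelessPart M i j ^ 2 = M i j ^ 2
      - 2 * (M.trace / Fintype.card ι) * (if i = j then M i j else 0)
      + (M.trace / Fintype.card ι) ^ 2 * (if i = j then 1 else 0) := by
    intro i j
    by_cases hij : i = j
    · simp [tracelessPart, hij]; ring
    · simp [tracelessPart, hij]
  simp only [expand, sum_add_distrib, sum_sub_distrib, ← mul_sum, sum_ite_eq, mem_univ, if_true,
    sum_const, card_univ, nsmul_eq_mul, mul_one]
  rw [show ∑ i, M i i = M.trace from rfl]
  field_simp
  ring

lemma sum_mul_tracelessPart {A : Matrix ι ι ℝ} (hA : A.trace = 0) (M : Matrix ι ι ℝ) :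
    ∑ i, ∑ j, A i j * tracelessPart M i j = ∑ i, ∑ j, A i j * M i j := by
  simp only [tracelessPart, Matrix.sub_apply, Matrix.smul_apply, smul_eq_mul, one_apply, mul_sub,
    sum_sub_distrib, mul_ite, mul_one, mul_zero, sum_ite_eq, mem_univ, if_true]
  rw [← sum_mul, show ∑ i, A i i = A.trace from rfl, hA, zero_mul, sub_zero]

end TracelessPart

lemma ricci_kulkarniNomizu_self {A : Matrix ι ι ℝ} (hA : A.trace = 0) :
    ricci (kulkarniNomizu A A) = (-2 : ℝ) • (A * A) := by
  rw [ricci_kulkarniNomizu, hA, zero_smul, zero_add]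
  module

lemma tensorInner_kulkarniNomizu_self {A : Matrix ι ι ℝ} (hA : A.IsSymm) :
    tensorInner (kulkarniNomizu A A) (kulkarniNomizu A A)
      = 8 * ((∑ i, ∑ j, A i j ^ 2) ^ 2 - ∑ i, ∑ j, (A * A) i j ^ 2) := by
  have hsq : ∑ i, ∑ j, ∑ k, ∑ l, A i k * A j l * (A i k * A j l)
      = (∑ i, ∑ j, A i j ^ 2) ^ 2 := by
    rw [pow_two, sum_mul_sum]
    refine sum_congr rfl fun i _ => sum_congr rfl fun j _ => ?_
    rw [sum_mul_sum]
    exact sum_congr rfl fun k _ => sum_congr rfl fun l _ => by ring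
  have hquart : ∑ i, ∑ j, ∑ k, ∑ l, A i l * A j k * (A i k * A j l)
      = ∑ i, ∑ j, (A * A) i j ^ 2 := by
    refine sum_congr rfl fun i _ => sum_congr rfl fun j _ => ?_
    rw [pow_two, mul_apply, sum_mul_sum]
    exact sum_congr rfl fun k _ => sum_congr rfl fun l _ => by
      rw [hA.apply k j, hA.apply l j]; ring
  rw [(isSkew_kulkarniNomizu A A).tensorInner_kulkarniNomizu, ← hsq, ← hquart]
  simp only [kulkarniNomizu, mul_sum, ← sum_sub_distrib]
  refine sum_congr rfl fun i _ => sum_congr rfl fun j _ => sum_congr rfl fun k _ =>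
    sum_congr rfl fun l _ => by ring

variable [DecidableEq ι]

lemma tensorInner_weylPart_kulkarniNomizu_self (hn : 2 < Fintype.card ι) {A : Matrix ι ι ℝ}
    (hA : A.IsSymm) (hA0 : A.trace = 0) :
    tensorInner (weylPart ((1 / 4 : ℝ) • kulkarniNomizu A A))
        (weylPart ((1 / 4 : ℝ) • kulkarniNomizu A A))
      = ((Fintype.card ι : ℝ) - 2) / (2 * ((Fintype.card ι : ℝ) - 1)) * (∑ i, ∑ j, A i j ^ 2) ^ 2
        - (Fintype.card ι : ℝ) / (2 * ((Fintype.card ι : ℝ) - 2))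
          * ∑ i, ∑ j, tracelessPart (A * A) i j ^ 2 := by
  have : Nonempty ι := Fintype.card_pos_iff.mp (by omega)
  have h1 := cast_card_sub_ne_zero hn (x := 1) one_le_two
  have h2 := cast_card_sub_ne_zero hn (x := 2) le_rfl
  rw [tensorInner_weylPart_self hn ((isSkew_kulkarniNomizu A A).smul _), map_smul,
    ricci_kulkarniNomizu_self hA0, tensorInner_smul_right, tensorInner_comm,
    tensorInner_smul_right, tensorInner_kulkarniNomizu_self hA, sum_sq_tracelessPart,
    hA.trace_mul_self]
  simp only [trace_smul, hA.trace_mul_self, Matrix.smul_apply, smul_eq_mul, mul_pow, ← mul_sum]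
  field_simp
  ring

theorem abs_neg_weyl_contraction_add_trace_cube_le (hn : 2 < Fintype.card ι)
    {A : Matrix ι ι ℝ} (hA : A.IsSymm) (hA0 : A.trace = 0)
    {W : ι → ι → ι → ι → ℝ} (hW : IsSkew W) (hW0 : ricci W = 0) :
    |-(∑ i, ∑ j, ∑ k, ∑ l, W i j k l * A i k * A j l)
        + (Fintype.card ι : ℝ) / (2 * ((Fintype.card ι : ℝ) - 2))
          * ∑ i, ∑ j, ∑ k, A i j * A j k * A k i|
      ≤ √(((Fintype.card ι : ℝ) - 2) / (2 * ((Fintype.card ι : ℝ) - 1)))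
          * (∑ i, ∑ j, A i j ^ 2)
          * √((∑ i, ∑ j, ∑ k, ∑ l, W i j k l ^ 2)
            + (Fintype.card ι : ℝ) / (2 * ((Fintype.card ι : ℝ) - 2)) * ∑ i, ∑ j, A i j ^ 2) := by
  have hn' : (2 : ℝ) < Fintype.card ι := by exact_mod_cast hn
  set c := (Fintype.card ι : ℝ) / (2 * ((Fintype.card ι : ℝ) - 2))
  have hc : 0 ≤ c := div_nonneg (Nat.cast_nonneg _) (by linarith)
  set V := weylPart ((1 / 4 : ℝ) • kulkarniNomizu A A)
  have hWV : tensorInner W V = ∑ i, ∑ j, ∑ k, ∑ l, W i j k l * A i k * A j l := by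
    rw [tensorInner_weylPart_of_ricci_eq_zero hW hW0, tensorInner_smul_right,
      hW.tensorInner_kulkarniNomizu]
    ring
  have hW_sq : tensorInner W W = ∑ i, ∑ j, ∑ k, ∑ l, W i j k l ^ 2 := by
    simp only [tensorInner, pow_two]
  have hV_sq : tensorInner V V + c * ∑ i, ∑ j, tracelessPart (A * A) i j ^ 2
      = ((Fintype.card ι : ℝ) - 2) / (2 * ((Fintype.card ι : ℝ) - 1))
        * (∑ i, ∑ j, A i j ^ 2) ^ 2 := by
    rw [tensorInner_weylPart_kulkarniNomizu_self hn hA hA0]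
    ring
  have hcube : (∑ i, ∑ j, ∑ k, A i j * A j k * A k i) ^ 2
      ≤ (∑ i, ∑ j, A i j ^ 2) * ∑ i, ∑ j, tracelessPart (A * A) i j ^ 2 := by
    rw [hA.sum_mul_mul_cycle, ← sum_mul_tracelessPart hA0]
    exact sum_sum_mul_sq_le _ _
  have key := abs_add_le_sqrt_mul_sqrt (u := -tensorInner W V)
    (v := c * ∑ i, ∑ j, ∑ k, A i j * A j k * A k i) (r := c * ∑ i, ∑ j, A i j ^ 2)
    (s := c * ∑ i, ∑ j, tracelessPart (A * A) i j ^ 2)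
    (tensorInner_self_nonneg W) (tensorInner_self_nonneg V)
    (mul_nonneg hc (by positivity)) (mul_nonneg hc (by positivity))
    (by rw [neg_sq]; exact tensorInner_sq_le W V)
    (by rw [mul_pow, mul_mul_mul_comm, ← pow_two]
        exact mul_le_mul_of_nonneg_left hcube (sq_nonneg c))
  rw [hWV, hW_sq, hV_sq, Real.sqrt_mul', Real.sqrt_sq (by positivity)] at key
  · linarith
  · positivity

end AlgebraicCurvature

theorem stmt_8_general (n : ℕ) (hn : 3 ≤ n) (A : Fin n → Fin n → ℝ)
    (hsym : ∀ i j, A i j = A j i) (htr : ∑ i, A i i = 0)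
    (W : Fin n → Fin n → Fin n → Fin n → ℝ)
    (hW1 : ∀ i j k l, W i j k l = - W j i k l)
    (hW2 : ∀ i j k l, W i j k l = - W i j l k)
    (hTrW : ∀ j l, ∑ i, W i j i l = 0) :
    |-(∑ i, ∑ j, ∑ k, ∑ l, W i j k l * A i k * A j l)
        + ((n : ℝ) / (2 * ((n : ℝ) - 2))) * ∑ i, ∑ j, ∑ k, A i j * A j k * A k i|
      ≤ Real.sqrt (((n : ℝ) - 2) / (2 * ((n : ℝ) - 1))) * (∑ i, ∑ j, (A i j) ^ 2) *
          Real.sqrt ((∑ i, ∑ j, ∑ k, ∑ l, (W i j k l) ^ 2)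
            + ((n : ℝ) / (2 * ((n : ℝ) - 2))) * ∑ i, ∑ j, (A i j) ^ 2) := by
  have key := AlgebraicCurvature.abs_neg_weyl_contraction_add_trace_cube_le
    (by rw [Fintype.card_fin]; omega) (Matrix.IsSymm.ext fun i j => hsym j i) htr
    ⟨fun i j k l => hW1 j i k l, fun i j k l => hW2 i j l k⟩ (by ext j l; exact hTrW j l)
  rwa [Fintype.card_fin] at key

theorem stmt_8 (n : ℕ) (hn : 3 ≤ n) (A : Fin n → Fin n → ℝ)
    (hsym : ∀ i j, A i j = A j i) (htr : ∑ i, A i i = 0)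
    (W : Fin n → Fin n → Fin n → Fin n → ℝ)
    (hW1 : ∀ i j k l, W i j k l = - W j i k l)
    (hW2 : ∀ i j k l, W i j k l = - W i j l k)
    (hW3 : ∀ i j k l, W i j k l = W k l i j)
    (hB : ∀ i j k l, W i j k l + W i k l j + W i l j k = 0)
    (hTrW : ∀ j l, ∑ i, W i j i l = 0) :
    |-(∑ i, ∑ j, ∑ k, ∑ l, W i j k l * A i k * A j l)
        + ((n : ℝ) / (2 * ((n : ℝ) - 2))) * ∑ i, ∑ j, ∑ k, A i j * A j k * A k i|
      ≤ Real.sqrt (((n : ℝ) - 2) / (2 * ((n : ℝ) - 1))) * (∑ i, ∑ j, (A i j) ^ 2) *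
          Real.sqrt ((∑ i, ∑ j, ∑ k, ∑ l, (W i j k l) ^ 2)
            + ((n : ℝ) / (2 * ((n : ℝ) - 2))) * ∑ i, ∑ j, (A i j) ^ 2) :=
  stmt_8_general n hn A hsym htr W hW1 hW2 hTrW
end

section
/- Let n ≥ 3 and let A be an n×n real symmetric trace-free matrix, W a totally trace-free (0,4)-tensor with Weyl symmetries, g the identity. Then |Σ (W + (√(2n)/(4(n−2)))·A⊙g)_{ijkl}·(A⊙A)_{ijkl}|² ≤ (8(n−2)/(n−1))·‖A‖⁴·(|W|² + (n/(2(n−2)))‖A‖²). -/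
/-!
Since `W` is totally trace-free, `⟨W, A⊙A⟩ = ⟨W, P⟩` where `P` is the Weyl part of `A⊙A`, so
Cauchy–Schwarz gives `⟨W, A⊙A⟩² ≤ |W|² |P|²`; and `|P|²` is computed from
`Ric(A⊙A) = -2A²`. Moreover `⟨A⊙g, A⊙A⟩ = 4⟨Ric(A⊙A), A⟩ = -8 tr A³`, and Cauchy–Schwarz against
the trace-free part of `A²` bounds `(tr A³)²` by `‖A‖²(‖A²‖² - ‖A‖⁴/n)`. A weighted
Cauchy–Schwarz inequality `(x + y)² ≤ (a + b)(p + r)` then combines the two bounds; the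
weights are chosen so that the `‖A²‖²` terms cancel exactly.
-/

open Finset Matrix

section

variable {ι : Type*}

def kulkarniNomizu (A B : Matrix ι ι ℝ) : ι → ι → ι → ι → ℝ := fun i j k l =>
  A i k * B j l + A j l * B i k - A i l * B j k - A j k * B i l

lemma kulkarniNomizu_apply_swap_left (A B : Matrix ι ι ℝ) (i j k l : ι) :
    kulkarniNomizu A B i j k l = -kulkarniNomizu A B j i k l := by
  simp only [kulkarniNomizu]; ring

lemma kulkarniNomizu_apply_swap_right (A B : Matrix ι ι ℝ) (i j k l : ι) :
    kulkarniNomizu A B i j k l = -kulkarniNomizu A B i j l k := by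
  simp only [kulkarniNomizu]; ring

variable [Fintype ι]

def tensorInner (S T : ι → ι → ι → ι → ℝ) : ℝ :=
  ∑ i, ∑ j, ∑ k, ∑ l, S i j k l * T i j k l

def frobInner (M N : Matrix ι ι ℝ) : ℝ := ∑ i, ∑ j, M i j * N i j

def ricci (T : ι → ι → ι → ι → ℝ) : Matrix ι ι ℝ := fun i k => ∑ j, T i j k j

lemma tensorInner_comm (S T : ι → ι → ι → ι → ℝ) : tensorInner S T = tensorInner T S := by
  simp only [tensorInner, mul_comm]

lemma tensorInner_sub_smul_right (S T K : ι → ι → ι → ι → ℝ) (c : ℝ) :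
    tensorInner S (T - c • K) = tensorInner S T - c * tensorInner S K := by
  simp only [tensorInner, Pi.sub_apply, Pi.smul_apply, smul_eq_mul, mul_sub, sum_sub_distrib,
    mul_sum, mul_left_comm c]

lemma tensorInner_sq_le (S T : ι → ι → ι → ι → ℝ) :
    tensorInner S T ^ 2 ≤ tensorInner S S * tensorInner T T := by
  simpa [tensorInner, Fintype.sum_prod_type, sq] using
    sum_mul_sq_le_sq_mul_sq univ (fun x : ι × ι × ι × ι => S x.1 x.2.1 x.2.2.1 x.2.2.2)
      (fun x => T x.1 x.2.1 x.2.2.1 x.2.2.2)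

lemma tensorInner_self_nonneg (T : ι → ι → ι → ι → ℝ) : 0 ≤ tensorInner T T :=
  sum_nonneg fun _ _ => sum_nonneg fun _ _ => sum_nonneg fun _ _ => sum_nonneg fun _ _ =>
    mul_self_nonneg _

lemma frobInner_comm (M N : Matrix ι ι ℝ) : frobInner M N = frobInner N M := by
  simp only [frobInner, mul_comm]

lemma frobInner_sub_smul_right (M N K : Matrix ι ι ℝ) (c : ℝ) :
    frobInner M (N - c • K) = frobInner M N - c * frobInner M K := by
  simp only [frobInner, Matrix.sub_apply, Matrix.smul_apply, smul_eq_mul, mul_sub,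
    sum_sub_distrib, mul_sum, mul_left_comm c]

lemma frobInner_smul_smul (M : Matrix ι ι ℝ) (c : ℝ) :
    frobInner (c • M) (c • M) = c ^ 2 * frobInner M M := by
  simp only [frobInner, Matrix.smul_apply, smul_eq_mul, mul_sum]
  exact sum_congr rfl fun _ _ => sum_congr rfl fun _ _ => by ring

lemma frobInner_self_nonneg (M : Matrix ι ι ℝ) : 0 ≤ frobInner M M :=
  sum_nonneg fun _ _ => sum_nonneg fun _ _ => mul_self_nonneg _

lemma frobInner_sq_le (M N : Matrix ι ι ℝ) :
    frobInner M N ^ 2 ≤ frobInner M M * frobInner N N := by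
  simpa [frobInner, Fintype.sum_prod_type, sq] using
    sum_mul_sq_le_sq_mul_sq univ (fun x : ι × ι => M x.1 x.2) (fun x => N x.1 x.2)

lemma trace_mul_self_of_isSymm {A : Matrix ι ι ℝ} (hA : A.IsSymm) :
    trace (A * A) = frobInner A A := by
  simp only [trace, diag_apply, mul_apply, frobInner]
  exact sum_congr rfl fun i _ => sum_congr rfl fun j _ => by rw [hA.apply i j]

lemma ricci_sub_smul (T K : ι → ι → ι → ι → ℝ) (c : ℝ) :
    ricci (T - c • K) = ricci T - c • ricci K := by
  ext i k
  simp only [ricci, Pi.sub_apply, Pi.smul_apply, smul_eq_mul, sum_sub_distrib, mul_sum,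
    Matrix.sub_apply, Matrix.smul_apply]

lemma ricci_kulkarniNomizu_self (A : Matrix ι ι ℝ) :
    ricci (kulkarniNomizu A A) = (2 : ℝ) • (trace A • A - A * A) := by
  ext i k
  simp only [ricci, kulkarniNomizu, sum_add_distrib, sum_sub_distrib, ← mul_sum, ← sum_mul,
    Matrix.smul_apply, Matrix.sub_apply, mul_apply, trace, diag_apply, smul_eq_mul]
  rw [sum_congr rfl fun j _ => mul_comm (A j k) (A i j)]
  ring

lemma ricci_kulkarniNomizu_self_of_trace_eq_zero {A : Matrix ι ι ℝ} (htr : trace A = 0) :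
    ricci (kulkarniNomizu A A) = (-2 : ℝ) • (A * A) := by
  rw [ricci_kulkarniNomizu_self, htr, zero_smul, zero_sub, smul_neg, neg_smul]

lemma tensorInner_kulkarniNomizu_self_self (A : Matrix ι ι ℝ) :
    tensorInner (kulkarniNomizu A A) (kulkarniNomizu A A)
      = 8 * frobInner A A ^ 2 - 8 * frobInner (A * Aᵀ) (A * Aᵀ) := by
  have hpt : ∀ i j k l, kulkarniNomizu A A i j k l * kulkarniNomizu A A i j k l
      = 4 * (A i k * A i k * (A j l * A j l)) - 8 * (A i k * A j k * (A i l * A j l))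
        + 4 * (A i l * A i l * (A j k * A j k)) := fun i j k l => by
    simp only [kulkarniNomizu]; ring
  have h₁ : ∑ i, ∑ j, ∑ k, ∑ l, A i k * A i k * (A j l * A j l) = frobInner A A ^ 2 := by
    simp only [frobInner, sq, sum_mul_sum]
  have h₂ : ∑ i, ∑ j, ∑ k, ∑ l, A i k * A j k * (A i l * A j l)
      = frobInner (A * Aᵀ) (A * Aᵀ) := by
    simp only [frobInner, mul_apply, transpose_apply, sum_mul_sum]
  have h₃ : ∑ i, ∑ j, ∑ k, ∑ l, A i l * A i l * (A j k * A j k) = frobInner A A ^ 2 := by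
    rw [← h₁]
    exact sum_congr rfl fun i _ => sum_congr rfl fun j _ => sum_comm
  calc tensorInner (kulkarniNomizu A A) (kulkarniNomizu A A)
      = 4 * ∑ i, ∑ j, ∑ k, ∑ l, A i k * A i k * (A j l * A j l)
        - 8 * ∑ i, ∑ j, ∑ k, ∑ l, A i k * A j k * (A i l * A j l)
        + 4 * ∑ i, ∑ j, ∑ k, ∑ l, A i l * A i l * (A j k * A j k) := by
        simp only [tensorInner, hpt, sum_add_distrib, sum_sub_distrib, mul_sum]
    _ = _ := by rw [h₁, h₂, h₃]; ring

variable [DecidableEq ι]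

lemma frobInner_one_right (M : Matrix ι ι ℝ) : frobInner M 1 = trace M := by
  simp [frobInner, one_apply, trace]

noncomputable def traceFreePart (M : Matrix ι ι ℝ) : Matrix ι ι ℝ :=
  M - (trace M / Fintype.card ι) • 1

lemma frobInner_traceFreePart_self (M : Matrix ι ι ℝ) :
    frobInner (traceFreePart M) (traceFreePart M)
      = frobInner M M - trace M ^ 2 / Fintype.card ι := by
  rw [traceFreePart, frobInner_sub_smul_right, frobInner_comm _ M, frobInner_comm _ 1,
    frobInner_sub_smul_right, frobInner_sub_smul_right, frobInner_comm 1 M, frobInner_one_right,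
    frobInner_one_right, trace_one]
  rcases eq_or_ne (Fintype.card ι : ℝ) 0 with h | h
  · simp [h]
  · field_simp; ring

lemma frobInner_traceFreePart_right {A : Matrix ι ι ℝ} (hA : trace A = 0) (M : Matrix ι ι ℝ) :
    frobInner A (traceFreePart M) = frobInner A M := by
  rw [traceFreePart, frobInner_sub_smul_right, frobInner_one_right, hA, mul_zero, sub_zero]

lemma sq_trace_div_card_le_frobInner_self (M : Matrix ι ι ℝ) :
    trace M ^ 2 / Fintype.card ι ≤ frobInner M M := by
  have := frobInner_self_nonneg (traceFreePart M)
  rw [frobInner_traceFreePart_self] at this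
  linarith

lemma sq_frobInner_le_of_trace_eq_zero {A : Matrix ι ι ℝ} (hA : trace A = 0)
    (M : Matrix ι ι ℝ) :
    frobInner A M ^ 2 ≤ frobInner A A * (frobInner M M - trace M ^ 2 / Fintype.card ι) := by
  rw [← frobInner_traceFreePart_right hA, ← frobInner_traceFreePart_self]
  exact frobInner_sq_le _ _

lemma sq_frobInner_self_div_card_le {A : Matrix ι ι ℝ} (hA : A.IsSymm) :
    frobInner A A ^ 2 / Fintype.card ι ≤ frobInner (A * A) (A * A) := by
  simpa only [trace_mul_self_of_isSymm hA] using sq_trace_div_card_le_frobInner_self (A * A)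

lemma sq_frobInner_mul_self_le {A : Matrix ι ι ℝ} (hA : A.IsSymm) (htr : trace A = 0) :
    frobInner (A * A) A ^ 2
      ≤ frobInner A A * (frobInner (A * A) (A * A) - frobInner A A ^ 2 / Fintype.card ι) := by
  simpa only [trace_mul_self_of_isSymm hA, frobInner_comm A] using
    sq_frobInner_le_of_trace_eq_zero htr (A * A)

lemma tensorInner_kulkarniNomizu_one {T : ι → ι → ι → ι → ℝ}
    (h₁ : ∀ i j k l, T i j k l = -T j i k l) (h₂ : ∀ i j k l, T i j k l = -T i j l k)
    (M : Matrix ι ι ℝ) : tensorInner T (kulkarniNomizu M 1) = 4 * frobInner (ricci T) M := by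
  have hR : frobInner (ricci T) M = ∑ i, ∑ j, ∑ k, T i j k j * M i k := by
    simp only [frobInner, ricci, sum_mul]
    exact sum_congr rfl fun i _ => sum_comm
  simp only [tensorInner, kulkarniNomizu, one_apply, mul_add, mul_sub, sum_add_distrib,
    sum_sub_distrib, mul_ite, mul_one, mul_zero, sum_ite_eq, mem_univ, if_true, sum_ite_irrel,
    sum_const_zero, hR]
  have h₁₂ : ∀ i j k l, T i j k l = T j i l k := fun i j k l => by rw [h₁, h₂, neg_neg]
  have e₂ : ∑ i, ∑ j, ∑ k, T i j i k * M j k = ∑ i, ∑ j, ∑ k, T i j k j * M i k := by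
    rw [sum_comm]
    exact sum_congr rfl fun j _ => sum_congr rfl fun i _ => sum_congr rfl fun k _ => by rw [h₁₂]
  have e₃ : ∑ i, ∑ j, ∑ k, T i j j k * M i k = -∑ i, ∑ j, ∑ k, T i j k j * M i k := by
    simp only [← sum_neg_distrib, ← neg_mul, ← h₂]
  have e₄ : ∑ i, ∑ j, ∑ k, T i j k i * M j k = -∑ i, ∑ j, ∑ k, T i j k j * M i k := by
    rw [sum_comm]
    simp only [← sum_neg_distrib, ← neg_mul, ← h₁]
  rw [e₂, e₃, e₄]
  ring

lemma ricci_kulkarniNomizu_one (M : Matrix ι ι ℝ) :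
    ricci (kulkarniNomizu M 1) = ((Fintype.card ι : ℝ) - 2) • M + trace M • 1 := by
  ext i k
  simp only [ricci, kulkarniNomizu, one_apply, ↓reduceIte, mul_one, mul_ite, mul_zero,
    sum_sub_distrib, sum_add_distrib, sum_const, card_univ, nsmul_eq_mul, sum_ite_irrel,
    sum_ite_eq', mem_univ, sum_ite_eq, trace, diag_apply, Matrix.add_apply,
    Matrix.smul_apply, smul_eq_mul]
  ring

noncomputable def weylPart (T : ι → ι → ι → ι → ℝ) : ι → ι → ι → ι → ℝ :=
  T - (1 / ((Fintype.card ι : ℝ) - 2)) • kulkarniNomizu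
    (ricci T - (trace (ricci T) / (2 * ((Fintype.card ι : ℝ) - 1))) • 1) 1

lemma weylPart_apply_swap_left {T : ι → ι → ι → ι → ℝ}
    (h₁ : ∀ i j k l, T i j k l = -T j i k l) (i j k l : ι) :
    weylPart T i j k l = -weylPart T j i k l := by
  simp only [weylPart, Pi.sub_apply, Pi.smul_apply, smul_eq_mul]
  rw [h₁, kulkarniNomizu_apply_swap_left]
  ring

lemma weylPart_apply_swap_right {T : ι → ι → ι → ι → ℝ}
    (h₂ : ∀ i j k l, T i j k l = -T i j l k) (i j k l : ι) :
    weylPart T i j k l = -weylPart T i j l k := by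
  simp only [weylPart, Pi.sub_apply, Pi.smul_apply, smul_eq_mul]
  rw [h₂, kulkarniNomizu_apply_swap_right]
  ring

lemma ricci_weylPart (hn : 3 ≤ Fintype.card ι) (T : ι → ι → ι → ι → ℝ) :
    ricci (weylPart T) = 0 := by
  have : (3 : ℝ) ≤ Fintype.card ι := by exact_mod_cast hn
  rw [weylPart, ricci_sub_smul, ricci_kulkarniNomizu_one, trace_sub, trace_smul, trace_one]
  ext i k
  simp only [Matrix.sub_apply, Matrix.smul_apply, Matrix.add_apply, one_apply, smul_eq_mul,
    Matrix.zero_apply]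
  have : (Fintype.card ι : ℝ) - 2 ≠ 0 := by linarith
  have : (Fintype.card ι : ℝ) - 1 ≠ 0 := by linarith
  split_ifs <;> field_simp <;> ring

lemma tensorInner_weylPart_right {W : ι → ι → ι → ι → ℝ}
    (h₁ : ∀ i j k l, W i j k l = -W j i k l) (h₂ : ∀ i j k l, W i j k l = -W i j l k)
    (hW : ricci W = 0) (T : ι → ι → ι → ι → ℝ) :
    tensorInner W (weylPart T) = tensorInner W T := by
  rw [weylPart, tensorInner_sub_smul_right, tensorInner_kulkarniNomizu_one h₁ h₂, hW]
  simp [frobInner]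

lemma tensorInner_weylPart_self (hn : 3 ≤ Fintype.card ι) {T : ι → ι → ι → ι → ℝ}
    (h₁ : ∀ i j k l, T i j k l = -T j i k l) (h₂ : ∀ i j k l, T i j k l = -T i j l k) :
    tensorInner (weylPart T) (weylPart T)
      = tensorInner T T - 4 / ((Fintype.card ι : ℝ) - 2) * (frobInner (ricci T) (ricci T)
          - trace (ricci T) ^ 2 / (2 * ((Fintype.card ι : ℝ) - 1))) := by
  rw [tensorInner_weylPart_right (weylPart_apply_swap_left h₁) (weylPart_apply_swap_right h₂)
      (ricci_weylPart hn T), tensorInner_comm, weylPart, tensorInner_sub_smul_right,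
    tensorInner_kulkarniNomizu_one h₁ h₂, frobInner_sub_smul_right, frobInner_one_right]
  ring

lemma tensorInner_weylPart_kulkarniNomizu_self (hn : 3 ≤ Fintype.card ι) {A : Matrix ι ι ℝ}
    (hA : A.IsSymm) (htr : trace A = 0) :
    tensorInner (weylPart (kulkarniNomizu A A)) (weylPart (kulkarniNomizu A A))
      = 8 * frobInner A A ^ 2 - 8 * frobInner (A * A) (A * A)
        - 16 / ((Fintype.card ι : ℝ) - 2) * (frobInner (A * A) (A * A)
          - frobInner A A ^ 2 / (2 * ((Fintype.card ι : ℝ) - 1))) := by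
  rw [tensorInner_weylPart_self hn (kulkarniNomizu_apply_swap_left A A)
      (kulkarniNomizu_apply_swap_right A A), tensorInner_kulkarniNomizu_self_self, hA.eq,
    ricci_kulkarniNomizu_self_of_trace_eq_zero htr, frobInner_smul_smul, trace_smul,
    trace_mul_self_of_isSymm hA, smul_eq_mul]
  ring

lemma tensorInner_kulkarniNomizu_one_self {A : Matrix ι ι ℝ} (htr : trace A = 0) :
    tensorInner (kulkarniNomizu A 1) (kulkarniNomizu A A) = -8 * frobInner (A * A) A := by
  rw [tensorInner_comm, tensorInner_kulkarniNomizu_one (kulkarniNomizu_apply_swap_left A A)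
      (kulkarniNomizu_apply_swap_right A A), ricci_kulkarniNomizu_self_of_trace_eq_zero htr]
  simp only [frobInner, Matrix.smul_apply, smul_eq_mul, mul_sum]
  exact sum_congr rfl fun _ _ => sum_congr rfl fun _ _ => by ring

end

lemma sq_add_le_mul_add {x y a b p r : ℝ} (hx : x ^ 2 ≤ a * p) (hy : y ^ 2 ≤ b * r)
    (ha : 0 ≤ a) (hb : 0 ≤ b) (hp : 0 ≤ p) (hr : 0 ≤ r) : (x + y) ^ 2 ≤ (a + b) * (p + r) := by
  have hxy : (2 * (x * y)) ^ 2 ≤ (a * r + b * p) ^ 2 := by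
    nlinarith [mul_le_mul hx hy (sq_nonneg y) (by positivity), sq_nonneg (a * r - b * p)]
  nlinarith [(abs_le_of_sq_le_sq' hxy (by positivity)).2]

lemma weyl_estimate_of_bounds {n σ τ t w p X : ℝ} (hn : 3 ≤ n) (hσ : 0 ≤ σ) (hw : 0 ≤ w)
    (hp : 0 ≤ p) (hτ : σ ^ 2 / n ≤ τ) (ht : t ^ 2 ≤ σ * (τ - σ ^ 2 / n))
    (hpval : p = 8 * σ ^ 2 - 8 * τ - 16 / (n - 2) * (τ - σ ^ 2 / (2 * (n - 1))))
    (hX : X ^ 2 ≤ w * p) :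
    (X + Real.sqrt (2 * n) / (4 * (n - 2)) * (-8 * t)) ^ 2
      ≤ 8 * (n - 2) / (n - 1) * σ ^ 2 * (w + n / (2 * (n - 2)) * σ) := by
  have hn2 : 0 < n - 2 := by linarith
  have hn1 : 0 < n - 1 := by linarith
  have hn0 : 0 < n := by linarith
  -- `r := 8 (nτ - σ²)/(n - 2)` makes `p + r` the constant of the claim, and `y² ≤ q r` with
  -- `q := nσ/(2(n - 2))` then follows from the bound on `t²`.
  have hr : 0 ≤ 8 * (n * τ - σ ^ 2) / (n - 2) := by
    have : σ ^ 2 ≤ n * τ := by rwa [div_le_iff₀ hn0, mul_comm] at hτ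
    apply div_nonneg <;> linarith
  have hpr : p + 8 * (n * τ - σ ^ 2) / (n - 2) = 8 * (n - 2) / (n - 1) * σ ^ 2 := by
    rw [hpval]; field_simp; ring
  have hy : (Real.sqrt (2 * n) / (4 * (n - 2)) * (-8 * t)) ^ 2
      ≤ n / (2 * (n - 2)) * σ * (8 * (n * τ - σ ^ 2) / (n - 2)) := by
    have hnt : n * t ^ 2 ≤ σ * (n * τ - σ ^ 2) := by
      have := mul_le_mul_of_nonneg_left ht hn0.le
      rwa [show n * (σ * (τ - σ ^ 2 / n)) = σ * (n * τ - σ ^ 2) by field_simp] at this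
    rw [mul_pow, div_pow, Real.sq_sqrt (by positivity)]
    rw [show n / (2 * (n - 2)) * σ * (8 * (n * τ - σ ^ 2) / (n - 2))
      = 2 * n / (4 * (n - 2)) ^ 2 * (32 * (σ * (n * τ - σ ^ 2))) by field_simp; ring]
    gcongr
    nlinarith [sq_nonneg t]
  calc _ ≤ (w + n / (2 * (n - 2)) * σ) * (p + 8 * (n * τ - σ ^ 2) / (n - 2)) :=
        sq_add_le_mul_add hX hy hw (by positivity) hp hr
    _ = _ := by rw [hpr]; ring

theorem stmt_9_general (n : ℕ) (hn : 3 ≤ n) (A : Fin n → Fin n → ℝ)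
    (hsym : ∀ i j, A i j = A j i) (htr : ∑ i, A i i = 0)
    (W : Fin n → Fin n → Fin n → Fin n → ℝ)
    (hW1 : ∀ i j k l, W i j k l = - W j i k l)
    (hW2 : ∀ i j k l, W i j k l = - W i j l k)
    (hTrW : ∀ j l, ∑ i, W i j i l = 0) :
    let δ : Fin n → Fin n → ℝ := fun i j => if i = j then 1 else 0
    let AKg : Fin n → Fin n → Fin n → Fin n → ℝ := fun i j k l =>
      A i k * δ j l - A i l * δ j k + A j l * δ i k - A j k * δ i l
    let AKA : Fin n → Fin n → Fin n → Fin n → ℝ := fun i j k l =>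
      2 * (A i k * A j l - A i l * A j k)
    let nA2 : ℝ := ∑ i, ∑ j, (A i j) ^ 2
    |∑ i, ∑ j, ∑ k, ∑ l,
        (W i j k l + (Real.sqrt (2 * (n : ℝ)) / (4 * ((n : ℝ) - 2))) * AKg i j k l)
          * AKA i j k l| ^ 2
      ≤ (8 * ((n : ℝ) - 2) / ((n : ℝ) - 1)) * nA2 ^ 2 *
          ((∑ i, ∑ j, ∑ k, ∑ l, (W i j k l) ^ 2)
            + ((n : ℝ) / (2 * ((n : ℝ) - 2))) * nA2) := by
  intro δ AKg AKA nA2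
  have hcard : 3 ≤ Fintype.card (Fin n) := by simpa using hn
  have hA : Matrix.IsSymm A := IsSymm.ext fun i j => hsym j i
  have hricciW : ricci W = 0 := by
    ext i k
    exact (sum_congr rfl fun j _ => by rw [hW1, hW2, neg_neg]).trans (hTrW i k)
  have hsplit : ∑ i, ∑ j, ∑ k, ∑ l, (W i j k l + (Real.sqrt (2 * (n : ℝ)) / (4 * ((n : ℝ) - 2)))
        * AKg i j k l) * AKA i j k l
      = tensorInner W (kulkarniNomizu A A) + Real.sqrt (2 * (n : ℝ)) / (4 * ((n : ℝ) - 2))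
        * tensorInner (kulkarniNomizu A 1) (kulkarniNomizu A A) := by
    simp only [tensorInner, AKg, AKA, δ, kulkarniNomizu, one_apply, mul_sum, ← sum_add_distrib]
    exact sum_congr rfl fun _ _ => sum_congr rfl fun _ _ => sum_congr rfl fun _ _ =>
      sum_congr rfl fun _ _ => by ring
  have hnA2 : nA2 = frobInner A A := by simp only [nA2, frobInner, sq]
  have hnW : ∑ i, ∑ j, ∑ k, ∑ l, W i j k l ^ 2 = tensorInner W W := by
    simp only [tensorInner, sq]
  have hP := tensorInner_weylPart_kulkarniNomizu_self hcard hA htr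
  have hτ := sq_frobInner_self_div_card_le hA
  have ht := sq_frobInner_mul_self_le hA htr
  rw [Fintype.card_fin] at hP hτ ht
  rw [hsplit, sq_abs, ← tensorInner_weylPart_right hW1 hW2 hricciW,
    tensorInner_kulkarniNomizu_one_self htr, hnA2, hnW]
  exact weyl_estimate_of_bounds (by exact_mod_cast hn) (frobInner_self_nonneg A)
    (tensorInner_self_nonneg W) (tensorInner_self_nonneg _) hτ ht hP (tensorInner_sq_le _ _)

theorem stmt_9 (n : ℕ) (hn : 3 ≤ n) (A : Fin n → Fin n → ℝ)
    (hsym : ∀ i j, A i j = A j i) (htr : ∑ i, A i i = 0)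
    (W : Fin n → Fin n → Fin n → Fin n → ℝ)
    (hW1 : ∀ i j k l, W i j k l = - W j i k l)
    (hW2 : ∀ i j k l, W i j k l = - W i j l k)
    (hW3 : ∀ i j k l, W i j k l = W k l i j)
    (hTrW : ∀ j l, ∑ i, W i j i l = 0) :
    let δ : Fin n → Fin n → ℝ := fun i j => if i = j then 1 else 0
    let AKg : Fin n → Fin n → Fin n → Fin n → ℝ := fun i j k l =>
      A i k * δ j l - A i l * δ j k + A j l * δ i k - A j k * δ i l
    let AKA : Fin n → Fin n → Fin n → Fin n → ℝ := fun i j k l =>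
      2 * (A i k * A j l - A i l * A j k)
    let nA2 : ℝ := ∑ i, ∑ j, (A i j) ^ 2
    |∑ i, ∑ j, ∑ k, ∑ l,
        (W i j k l + (Real.sqrt (2 * (n : ℝ)) / (4 * ((n : ℝ) - 2))) * AKg i j k l)
          * AKA i j k l| ^ 2
      ≤ (8 * ((n : ℝ) - 2) / ((n : ℝ) - 1)) * nA2 ^ 2 *
          ((∑ i, ∑ j, ∑ k, ∑ l, (W i j k l) ^ 2)
            + ((n : ℝ) / (2 * ((n : ℝ) - 2))) * nA2) :=
  stmt_9_general n hn A hsym htr W hW1 hW2 hTrW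
end

section
/- (Final pointwise estimate in proof of Theorem 1.1) Let n ≥ 3, R > 0 real, A an n×n symmetric trace-free matrix, and W a totally trace-free (0,4)-tensor with Weyl symmetries. If |W|² + (n/(2(n−2)))‖A‖² < R²/(2(n−1)(n−2)), then (R/(n−1))‖A‖² − 2Σ W_{ijkl}A_{ik}A_{jl} + (n/(n−2))·tr(A³) ≥ [R/(n−1) − 2√((n−2)/(2(n−1)))·(|W|² + (n/(2(n−2)))‖A‖²)^{1/2}]·‖A‖², and this quantity is nonnegative, equal to zero only if A = 0. -/
/-!
Write `⊙` for the Kulkarni–Nomizu product, `g` for the metric and `B̊` for the trace-free part of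
`A²`. The tensor `U = ½ A ⊙ A + B̊ ⊙ g / (n - 2) + |A|² g ⊙ g / (2n(n - 1))` is totally trace-free,
so it is orthogonal to every `h ⊙ g`. Hence `⟨W, U⟩ = 2 W(A, A)` for the trace-free `W`, and
`|U|² / 4 + β |B̊|² = (n - 2) / (2(n - 1)) · |A|⁴` with `β = n / (2(n - 2))`. As `tr A³ = ⟨A, B̊⟩`,
Cauchy–Schwarz for `(W, √β A)` against `(-U / 2, √β B̊)` bounds `|-W(A, A) + β tr A³|` by
`√((n - 2) / (2(n - 1))) |A|² (|W|² + β |A|²)^{1/2}`, while the pinching hypothesis says exactly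
that `2 √((n - 2) / (2(n - 1))) (|W|² + β |A|²)^{1/2} < R / (n - 1)`.
-/

open Finset

namespace WeylPinching

noncomputable section

variable {n : ℕ}

def kron (i j : Fin n) : ℝ := if i = j then 1 else 0

def ricci (V : Fin n → Fin n → Fin n → Fin n → ℝ) (j l : Fin n) : ℝ := ∑ i, V i j i l

def kulkarniNomizu (a b : Fin n → Fin n → ℝ) (i j k l : Fin n) : ℝ :=
  a i k * b j l + a j l * b i k - a i l * b j k - a j k * b i l

def inner4 (V V' : Fin n → Fin n → Fin n → Fin n → ℝ) : ℝ :=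
  ∑ i, ∑ j, ∑ k, ∑ l, V i j k l * V' i j k l

def normSq (a : Fin n → Fin n → ℝ) : ℝ := ∑ i, ∑ j, a i j ^ 2

def gram (A : Fin n → Fin n → ℝ) (k l : Fin n) : ℝ := ∑ i, A i k * A i l

def gramTraceless (A : Fin n → Fin n → ℝ) (k l : Fin n) : ℝ := gram A k l - normSq A / n * kron k l

def weylPart (A : Fin n → Fin n → ℝ) (i j k l : Fin n) : ℝ :=
  kulkarniNomizu A A i j k l / 2 + kulkarniNomizu (gramTraceless A) kron i j k l / (n - 2)
    + normSq A / (2 * n * (n - 1)) * kulkarniNomizu kron kron i j k l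

@[simp] lemma kron_self (i : Fin n) : kron i i = 1 := if_pos rfl

@[simp] lemma sum_mul_kron (f : Fin n → ℝ) (a : Fin n) : ∑ x, f x * kron a x = f a := by
  simp [kron]

@[simp] lemma sum_mul_kron' (f : Fin n → ℝ) (a : Fin n) : ∑ x, f x * kron x a = f a := by
  simp [kron]

@[simp] lemma sum_kron_mul (f : Fin n → ℝ) (a : Fin n) : ∑ x, kron a x * f x = f a := by
  simp [kron]

lemma sum4_congr {f g : Fin n → Fin n → Fin n → Fin n → ℝ}
    (h : ∀ i j k l, f i j k l = g i j k l) :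
    ∑ i, ∑ j, ∑ k, ∑ l, f i j k l = ∑ i, ∑ j, ∑ k, ∑ l, g i j k l := by
  simp only [h]

lemma sum4_swap_left (f : Fin n → Fin n → Fin n → Fin n → ℝ) :
    ∑ i, ∑ j, ∑ k, ∑ l, f i j k l = ∑ i, ∑ j, ∑ k, ∑ l, f j i k l :=
  sum_comm

lemma sum4_swap_right (f : Fin n → Fin n → Fin n → Fin n → ℝ) :
    ∑ i, ∑ j, ∑ k, ∑ l, f i j k l = ∑ i, ∑ j, ∑ k, ∑ l, f i j l k :=
  sum_congr rfl fun _ _ => sum_congr rfl fun _ _ => sum_comm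

lemma inner4_comm (V V' : Fin n → Fin n → Fin n → Fin n → ℝ) : inner4 V V' = inner4 V' V := by
  simp only [inner4, mul_comm (V _ _ _ _)]

lemma kulkarniNomizu_antisymm_left (a b : Fin n → Fin n → ℝ) (i j k l : Fin n) :
    kulkarniNomizu a b i j k l = -kulkarniNomizu a b j i k l := by
  simp only [kulkarniNomizu]; ring

lemma kulkarniNomizu_antisymm_right (a b : Fin n → Fin n → ℝ) (i j k l : Fin n) :
    kulkarniNomizu a b i j k l = -kulkarniNomizu a b i j l k := by
  simp only [kulkarniNomizu]; ring

lemma ricci_kulkarniNomizu (a b : Fin n → Fin n → ℝ) (j l : Fin n) :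
    ricci (kulkarniNomizu a b) j l = (∑ i, a i i) * b j l + (∑ i, b i i) * a j l
      - ∑ i, a i l * b j i - ∑ i, a j i * b i l := by
  simp only [ricci, kulkarniNomizu, sum_add_distrib, sum_sub_distrib, sum_mul, mul_comm (a j l)]

lemma ricci_kulkarniNomizu_self (A : Fin n → Fin n → ℝ) (hsym : ∀ i j, A i j = A j i)
    (htr : ∑ i, A i i = 0) (j l : Fin n) : ricci (kulkarniNomizu A A) j l = -2 * gram A j l := by
  have h : ∑ i, A j i * A i l = gram A j l := sum_congr rfl fun i _ => by rw [hsym j i]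
  rw [ricci_kulkarniNomizu, htr, sum_congr rfl fun i _ => mul_comm (A i l) (A j i), h]
  ring

lemma ricci_kulkarniNomizu_kron (a : Fin n → Fin n → ℝ) (j l : Fin n) :
    ricci (kulkarniNomizu a kron) j l = (∑ i, a i i) * kron j l + (n - 2) * a j l := by
  simp only [ricci_kulkarniNomizu, kron_self, sum_const, card_univ, Fintype.card_fin, nsmul_eq_mul, mul_one,
    sum_mul_kron, sum_mul_kron']
  ring

lemma inner4_kulkarniNomizu (V : Fin n → Fin n → Fin n → Fin n → ℝ)
    (hV₁ : ∀ i j k l, V i j k l = -V j i k l) (hV₂ : ∀ i j k l, V i j k l = -V i j l k)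
    (a b : Fin n → Fin n → ℝ) :
    inner4 V (kulkarniNomizu a b) = 4 * ∑ i, ∑ j, ∑ k, ∑ l, V i j k l * a i k * b j l := by
  have h₂ : ∑ i, ∑ j, ∑ k, ∑ l, V i j k l * a j l * b i k
      = ∑ i, ∑ j, ∑ k, ∑ l, V i j k l * a i k * b j l := by
    rw [sum4_swap_left, sum4_swap_right]
    refine sum4_congr fun i j k l => ?_
    rw [hV₁ j i l k, hV₂ i j l k]; ring
  have h₃ : ∑ i, ∑ j, ∑ k, ∑ l, V i j k l * a i l * b j k
      = -∑ i, ∑ j, ∑ k, ∑ l, V i j k l * a i k * b j l := by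
    rw [sum4_swap_right]
    simp only [← sum_neg_distrib]
    refine sum4_congr fun i j k l => ?_
    rw [hV₂ i j l k]; ring
  have h₄ : ∑ i, ∑ j, ∑ k, ∑ l, V i j k l * a j k * b i l
      = -∑ i, ∑ j, ∑ k, ∑ l, V i j k l * a i k * b j l := by
    rw [sum4_swap_left]
    simp only [← sum_neg_distrib]
    refine sum4_congr fun i j k l => ?_
    rw [hV₁ j i k l]; ring
  simp only [inner4, kulkarniNomizu, mul_add, mul_sub, sum_add_distrib, sum_sub_distrib, ← mul_assoc]
  rw [h₂, h₃, h₄]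
  ring

lemma inner4_kulkarniNomizu_kron (V : Fin n → Fin n → Fin n → Fin n → ℝ)
    (hV₁ : ∀ i j k l, V i j k l = -V j i k l) (hV₂ : ∀ i j k l, V i j k l = -V i j l k)
    (a : Fin n → Fin n → ℝ) :
    inner4 V (kulkarniNomizu a kron) = 4 * ∑ i, ∑ k, a i k * ricci V i k := by
  rw [inner4_kulkarniNomizu V hV₁ hV₂]
  congr 1
  refine sum_congr rfl fun i _ => ?_
  rw [sum_comm]
  refine sum_congr rfl fun k _ => ?_
  simp only [sum_mul_kron, ricci, mul_sum]
  refine sum_congr rfl fun j _ => ?_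
  rw [hV₁ i j k j, hV₂ j i k j]; ring

lemma sum_gram_diag (A : Fin n → Fin n → ℝ) : ∑ k, gram A k k = normSq A := by
  rw [normSq, sum_comm]
  simp only [gram, sq]

lemma sum_gramTraceless_diag (A : Fin n → Fin n → ℝ) (hn : (n : ℝ) ≠ 0) : ∑ k, gramTraceless A k k = 0 := by
  simp only [gramTraceless, sum_sub_distrib, sum_gram_diag, kron_self, mul_one, sum_const, card_univ,
    Fintype.card_fin, nsmul_eq_mul]
  field_simp
  ring

lemma sum_gramTraceless_mul_gram (A : Fin n → Fin n → ℝ) (hn : (n : ℝ) ≠ 0) :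
    ∑ i, ∑ j, gramTraceless A i j * gram A i j = ∑ i, ∑ j, gramTraceless A i j ^ 2 := by
  have h : ∀ i j, gramTraceless A i j * gram A i j
      = gramTraceless A i j ^ 2 + normSq A / n * (gramTraceless A i j * kron i j) := fun i j => by
    simp only [gramTraceless]; ring
  simp only [h, sum_add_distrib, ← mul_sum, sum_mul_kron, sum_gramTraceless_diag A hn, mul_zero,
    add_zero]

lemma sum_gram_sq (A : Fin n → Fin n → ℝ) (hn : (n : ℝ) ≠ 0) :
    ∑ i, ∑ j, gram A i j ^ 2 = ∑ i, ∑ j, gramTraceless A i j ^ 2 + normSq A ^ 2 / n := by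
  have h : ∀ i j, gram A i j ^ 2 = gramTraceless A i j ^ 2 + 2 * normSq A / n * (gramTraceless A i j * kron i j)
      + (normSq A / n) ^ 2 * (kron i j * kron i j) := fun i j => by
    simp only [gramTraceless, kron]; split_ifs <;> ring
  simp only [h, sum_add_distrib, ← mul_sum, sum_mul_kron, sum_gramTraceless_diag A hn, kron_self,
    sum_const, card_univ, Fintype.card_fin, nsmul_eq_mul]
  field_simp
  ring

lemma sum_mul_gramTraceless (A : Fin n → Fin n → ℝ) (hsym : ∀ i j, A i j = A j i)
    (htr : ∑ i, A i i = 0) :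
    ∑ i, ∑ k, A i k * gramTraceless A i k = ∑ i, ∑ j, ∑ k, A i j * A j k * A k i := by
  have h : ∀ i k, A i k * gramTraceless A i k = A i k * gram A i k - normSq A / n * (A i k * kron i k) :=
    fun i k => by simp only [gramTraceless]; ring
  simp only [h, sum_sub_distrib, ← mul_sum, sum_mul_kron, htr, mul_zero, sub_zero]
  refine sum_congr rfl fun i _ => ?_
  simp only [gram, mul_sum]
  rw [sum_comm]
  refine sum_congr rfl fun j _ => sum_congr rfl fun k _ => ?_
  rw [hsym j i, hsym k i]; ring

section WeylPart

variable (A : Fin n → Fin n → ℝ)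

lemma weylPart_antisymm_left (i j k l : Fin n) : weylPart A i j k l = -weylPart A j i k l := by
  simp only [weylPart, kulkarniNomizu]; ring

lemma weylPart_antisymm_right (i j k l : Fin n) :
    weylPart A i j k l = -weylPart A i j l k := by
  simp only [weylPart, kulkarniNomizu]; ring

lemma ricci_weylPart (hn : 3 ≤ n) (hsym : ∀ i j, A i j = A j i) (htr : ∑ i, A i i = 0)
    (j l : Fin n) : ricci (weylPart A) j l = 0 := by
  have hn' : (3 : ℝ) ≤ n := by exact_mod_cast hn
  have h : ricci (weylPart A) j l = ricci (kulkarniNomizu A A) j l / 2 + ricci (kulkarniNomizu (gramTraceless A) kron) j l / (n - 2)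
      + normSq A / (2 * n * (n - 1)) * ricci (kulkarniNomizu kron kron) j l := by
    simp only [ricci, weylPart, sum_add_distrib, ← sum_div, ← mul_sum]
  rw [h, ricci_kulkarniNomizu_self A hsym htr, ricci_kulkarniNomizu_kron, ricci_kulkarniNomizu_kron, sum_gramTraceless_diag A (by positivity)]
  simp only [gramTraceless, kron_self, sum_const, card_univ, Fintype.card_fin, nsmul_eq_mul, mul_one]
  have : (n : ℝ) - 2 ≠ 0 := by linarith
  have : (n : ℝ) - 1 ≠ 0 := by linarith
  field_simp
  ring

lemma inner4_weylPart (V : Fin n → Fin n → Fin n → Fin n → ℝ) :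
    inner4 V (weylPart A) = inner4 V (kulkarniNomizu A A) / 2 + inner4 V (kulkarniNomizu (gramTraceless A) kron) / (n - 2)
      + normSq A / (2 * n * (n - 1)) * inner4 V (kulkarniNomizu kron kron) := by
  simp only [inner4, weylPart, mul_add, sum_add_distrib, mul_div_assoc', ← sum_div,
    mul_left_comm _ (normSq A / _), ← mul_sum]

lemma inner4_weylPart_of_ricci_eq_zero (V : Fin n → Fin n → Fin n → Fin n → ℝ)
    (hV₁ : ∀ i j k l, V i j k l = -V j i k l) (hV₂ : ∀ i j k l, V i j k l = -V i j l k)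
    (hric : ∀ j l, ricci V j l = 0) : inner4 V (weylPart A) = inner4 V (kulkarniNomizu A A) / 2 := by
  simp only [inner4_weylPart, inner4_kulkarniNomizu_kron V hV₁ hV₂, hric, mul_zero, sum_const_zero]
  ring

lemma inner4_kulkarniNomizu_self (hsym : ∀ i j, A i j = A j i) :
    inner4 (kulkarniNomizu A A) (kulkarniNomizu A A) = 8 * normSq A ^ 2 - 8 * ∑ i, ∑ j, gram A i j ^ 2 := by
  rw [inner4_kulkarniNomizu _ (kulkarniNomizu_antisymm_left A A) (kulkarniNomizu_antisymm_right A A)]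
  have h : ∀ i j k l, kulkarniNomizu A A i j k l * A i k * A j l
      = 2 * (A i k ^ 2 * A j l ^ 2) - 2 * ((A i k * A j k) * (A i l * A j l)) := fun i j k l => by
    simp only [kulkarniNomizu]; ring
  have hg : ∀ i j, ∑ k, A i k * A j k = gram A i j := fun i j =>
    sum_congr rfl fun k _ => by rw [hsym i k, hsym j k]
  simp only [h, sum_sub_distrib, ← mul_sum, ← sum_mul, hg, normSq]
  simp only [← sq]
  ring

lemma inner4_weylPart_self (hn : 3 ≤ n) (hsym : ∀ i j, A i j = A j i) (htr : ∑ i, A i i = 0) :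
    inner4 (weylPart A) (weylPart A)
      = 2 * (n - 2) / (n - 1) * normSq A ^ 2 - 2 * n / (n - 2) * ∑ i, ∑ j, gramTraceless A i j ^ 2 := by
  have hn' : (3 : ℝ) ≤ n := by exact_mod_cast hn
  have hn₀ : (n : ℝ) ≠ 0 := by positivity
  have hn₁ : (n : ℝ) - 1 ≠ 0 := by linarith
  have hn₂ : (n : ℝ) - 2 ≠ 0 := by linarith
  have hAA₁ := kulkarniNomizu_antisymm_left A A
  have hAA₂ := kulkarniNomizu_antisymm_right A A
  have hAA_ricci := ricci_kulkarniNomizu_self A hsym htr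
  rw [inner4_weylPart_of_ricci_eq_zero A _ (weylPart_antisymm_left A) (weylPart_antisymm_right A)
      (ricci_weylPart A hn hsym htr), inner4_comm, inner4_weylPart, inner4_kulkarniNomizu_self A hsym,
    inner4_kulkarniNomizu_kron _ hAA₁ hAA₂, inner4_kulkarniNomizu_kron _ hAA₁ hAA₂]
  simp only [hAA_ricci, mul_left_comm _ (-2 : ℝ), ← mul_sum, sum_kron_mul, sum_gram_diag,
    sum_gramTraceless_mul_gram A hn₀, sum_gram_sq A hn₀]
  field_simp
  ring

end WeylPart

lemma inner4_self (V : Fin n → Fin n → Fin n → Fin n → ℝ) :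
    inner4 V V = ∑ i, ∑ j, ∑ k, ∑ l, V i j k l ^ 2 := by
  simp only [inner4, sq]

lemma inner4_self_nonneg (V : Fin n → Fin n → Fin n → Fin n → ℝ) : 0 ≤ inner4 V V := by
  rw [inner4_self]; positivity

lemma normSq_nonneg (a : Fin n → Fin n → ℝ) : 0 ≤ normSq a := by
  unfold normSq; positivity

lemma sq_inner4_le (V V' : Fin n → Fin n → Fin n → Fin n → ℝ) :
    inner4 V V' ^ 2 ≤ inner4 V V * inner4 V' V' := by
  simpa only [inner4_self, inner4, Fintype.sum_prod_type, sq] using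
    sum_mul_sq_le_sq_mul_sq univ (fun x : Fin n × Fin n × Fin n × Fin n => V x.1 x.2.1 x.2.2.1 x.2.2.2)
      (fun x => V' x.1 x.2.1 x.2.2.1 x.2.2.2)

lemma sq_sum_mul_le_normSq_mul (a b : Fin n → Fin n → ℝ) :
    (∑ i, ∑ j, a i j * b i j) ^ 2 ≤ normSq a * normSq b := by
  simpa only [normSq, Fintype.sum_prod_type] using
    sum_mul_sq_le_sq_mul_sq univ (fun x : Fin n × Fin n => a x.1 x.2) (fun x => b x.1 x.2)

lemma sq_add_le_mul_add {p q a b c e : ℝ} (ha : 0 ≤ a) (hb : 0 ≤ b) (hc : 0 ≤ c) (he : 0 ≤ e)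
    (hp : p ^ 2 ≤ a * c) (hq : q ^ 2 ≤ b * e) : (p + q) ^ 2 ≤ (a + b) * (c + e) := by
  have hpq : (2 * (p * q)) ^ 2 ≤ (a * e + b * c) ^ 2 := by
    nlinarith [mul_le_mul hp hq (sq_nonneg q) (mul_nonneg ha hc), sq_nonneg (a * e - b * c)]
  nlinarith [(abs_le_of_sq_le_sq' hpq (by positivity)).2]

lemma sq_weyl_cubic_le (hn : 3 ≤ n) (A : Fin n → Fin n → ℝ) (hsym : ∀ i j, A i j = A j i)
    (htr : ∑ i, A i i = 0) (W : Fin n → Fin n → Fin n → Fin n → ℝ)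
    (hW₁ : ∀ i j k l, W i j k l = -W j i k l) (hW₂ : ∀ i j k l, W i j k l = -W i j l k)
    (hric : ∀ j l, ∑ i, W i j i l = 0) :
    (-(∑ i, ∑ j, ∑ k, ∑ l, W i j k l * A i k * A j l)
        + n / (2 * (n - 2)) * ∑ i, ∑ j, ∑ k, A i j * A j k * A k i) ^ 2
      ≤ (n - 2) / (2 * (n - 1)) * normSq A ^ 2
        * (∑ i, ∑ j, ∑ k, ∑ l, W i j k l ^ 2 + n / (2 * (n - 2)) * normSq A) := by
  have hn' : (3 : ℝ) ≤ n := by exact_mod_cast hn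
  have hβ : 0 ≤ (n : ℝ) / (2 * (n - 2)) := div_nonneg (by positivity) (by linarith)
  set β : ℝ := n / (2 * (n - 2)) with hβ_def
  set U := weylPart A
  have hL : -(∑ i, ∑ j, ∑ k, ∑ l, W i j k l * A i k * A j l)
        + β * ∑ i, ∑ j, ∑ k, A i j * A j k * A k i
      = -inner4 W U / 2 + β * ∑ i, ∑ k, A i k * gramTraceless A i k := by
    rw [inner4_weylPart_of_ricci_eq_zero A W hW₁ hW₂ hric, inner4_kulkarniNomizu W hW₁ hW₂,
      sum_mul_gramTraceless A hsym htr]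
    ring
  have hU : inner4 U U / 4 + β * normSq (gramTraceless A) = (n - 2) / (2 * (n - 1)) * normSq A ^ 2 := by
    rw [inner4_weylPart_self A hn hsym htr, hβ_def]
    unfold normSq
    have : (n : ℝ) - 2 ≠ 0 := by linarith
    have : (n : ℝ) - 1 ≠ 0 := by linarith
    field_simp
    ring
  have hp : (-inner4 W U / 2) ^ 2 ≤ inner4 W W * (inner4 U U / 4) := by
    nlinarith [sq_inner4_le W U]
  have hq : (β * ∑ i, ∑ k, A i k * gramTraceless A i k) ^ 2 ≤ (β * normSq A) * (β * normSq (gramTraceless A)) := by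
    rw [mul_pow]
    nlinarith [sq_sum_mul_le_normSq_mul A (gramTraceless A), sq_nonneg β]
  rw [hL, ← inner4_self, mul_comm _ (inner4 W W + _), ← hU]
  exact sq_add_le_mul_add (inner4_self_nonneg W) (mul_nonneg hβ (normSq_nonneg A))
    (by linarith [inner4_self_nonneg U]) (mul_nonneg hβ (normSq_nonneg _)) hp hq

theorem abs_weyl_cubic_le (hn : 3 ≤ n) (A : Fin n → Fin n → ℝ) (hsym : ∀ i j, A i j = A j i)
    (htr : ∑ i, A i i = 0) (W : Fin n → Fin n → Fin n → Fin n → ℝ)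
    (hW₁ : ∀ i j k l, W i j k l = -W j i k l) (hW₂ : ∀ i j k l, W i j k l = -W i j l k)
    (hric : ∀ j l, ∑ i, W i j i l = 0) :
    |-(∑ i, ∑ j, ∑ k, ∑ l, W i j k l * A i k * A j l)
        + n / (2 * (n - 2)) * ∑ i, ∑ j, ∑ k, A i j * A j k * A k i|
      ≤ √((n - 2) / (2 * (n - 1))) * normSq A
        * √(∑ i, ∑ j, ∑ k, ∑ l, W i j k l ^ 2 + n / (2 * (n - 2)) * normSq A) := by
  have hn' : (3 : ℝ) ≤ n := by exact_mod_cast hn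
  have hk : 0 ≤ ((n : ℝ) - 2) / (2 * (n - 1)) := div_nonneg (by linarith) (by linarith)
  have h := Real.abs_le_sqrt (sq_weyl_cubic_le hn A hsym htr W hW₁ hW₂ hric)
  rwa [Real.sqrt_mul (mul_nonneg hk (sq_nonneg _)), Real.sqrt_mul hk,
    Real.sqrt_sq (normSq_nonneg A)] at h

lemma eq_zero_of_normSq_eq_zero {a : Fin n → Fin n → ℝ} (h : normSq a = 0) (i j : Fin n) :
    a i j = 0 := by
  have hrow := (Fintype.sum_eq_zero_iff_of_nonneg fun i => by positivity).1 h
  have hij := (Fintype.sum_eq_zero_iff_of_nonneg fun j => by positivity).1 (congrFun hrow i)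
  exact pow_eq_zero_iff two_ne_zero |>.1 (congrFun hij j)

lemma two_sqrt_mul_sqrt_lt_of_pinching {d R S : ℝ} (hd : 2 < d) (hR : 0 < R)
    (hS : S < R ^ 2 / (2 * (d - 1) * (d - 2))) :
    2 * √((d - 2) / (2 * (d - 1))) * √S < R / (d - 1) := by
  have hd₁ : d - 1 ≠ 0 := by linarith
  have hd₂ : d - 2 ≠ 0 := by linarith
  have hk : 0 < (d - 2) / (2 * (d - 1)) := div_pos (by linarith) (by linarith)
  have hkS : (d - 2) / (2 * (d - 1)) * S < (R / (2 * (d - 1))) ^ 2 :=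
    calc (d - 2) / (2 * (d - 1)) * S
        < (d - 2) / (2 * (d - 1)) * (R ^ 2 / (2 * (d - 1) * (d - 2))) :=
          mul_lt_mul_of_pos_left hS hk
      _ = (R / (2 * (d - 1))) ^ 2 := by field_simp
  have h := (Real.sqrt_lt' (div_pos hR (by linarith))).2 hkS
  rw [Real.sqrt_mul hk.le] at h
  linarith [show R / (d - 1) = 2 * (R / (2 * (d - 1))) by field_simp]

end

end WeylPinching

open WeylPinching

theorem stmt_15_general (n : ℕ) (hn : 3 ≤ n) (R : ℝ) (hR : 0 < R)
    (A : Fin n → Fin n → ℝ)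
    (hsym : ∀ i j, A i j = A j i) (htr : ∑ i, A i i = 0)
    (W : Fin n → Fin n → Fin n → Fin n → ℝ)
    (hW1 : ∀ i j k l, W i j k l = - W j i k l)
    (hW2 : ∀ i j k l, W i j k l = - W i j l k)
    (hTrW : ∀ j l, ∑ i, W i j i l = 0)
    (hpinch : (∑ i, ∑ j, ∑ k, ∑ l, (W i j k l) ^ 2)
        + ((n : ℝ) / (2 * ((n : ℝ) - 2))) * (∑ i, ∑ j, (A i j) ^ 2)
        < R ^ 2 / (2 * ((n : ℝ) - 1) * ((n : ℝ) - 2))) :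
    let nA2 : ℝ := ∑ i, ∑ j, (A i j) ^ 2
    let E : ℝ := (R / ((n : ℝ) - 1)) * nA2
      - 2 * (∑ i, ∑ j, ∑ k, ∑ l, W i j k l * A i k * A j l)
      + ((n : ℝ) / ((n : ℝ) - 2)) * (∑ i, ∑ j, ∑ k, A i j * A j k * A k i)
    E ≥ (R / ((n : ℝ) - 1)
          - 2 * Real.sqrt (((n : ℝ) - 2) / (2 * ((n : ℝ) - 1))) *
              Real.sqrt ((∑ i, ∑ j, ∑ k, ∑ l, (W i j k l) ^ 2)
                + ((n : ℝ) / (2 * ((n : ℝ) - 2))) * nA2)) * nA2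
      ∧ 0 ≤ E ∧ (E = 0 → ∀ i j, A i j = 0) := by
  intro nA2 E
  have hn' : (3 : ℝ) ≤ n := by exact_mod_cast hn
  set k : ℝ := (n - 2) / (2 * (n - 1))
  set S : ℝ := ∑ i, ∑ j, ∑ k, ∑ l, W i j k l ^ 2 + n / (2 * (n - 2)) * nA2
  set L : ℝ := -(∑ i, ∑ j, ∑ k, ∑ l, W i j k l * A i k * A j l)
    + n / (2 * (n - 2)) * ∑ i, ∑ j, ∑ k, A i j * A j k * A k i
  have hL : |L| ≤ √k * nA2 * √S := abs_weyl_cubic_le hn A hsym htr W hW1 hW2 hTrW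
  have hE : E = R / (n - 1) * nA2 + 2 * L := by
    have : (n : ℝ) - 2 ≠ 0 := by linarith
    simp only [E, L]; field_simp; ring
  have hgap := two_sqrt_mul_sqrt_lt_of_pinching (by linarith) hR hpinch
  have hnA2 : 0 ≤ nA2 := normSq_nonneg A
  have hbound : (R / (n - 1) - 2 * √k * √S) * nA2 ≤ E := by
    rw [hE]; nlinarith [(abs_le.1 hL).1]
  have hE₀ : 0 ≤ E := (mul_nonneg (by linarith) hnA2).trans hbound
  refine ⟨hbound, hE₀, fun h0 => eq_zero_of_normSq_eq_zero (le_antisymm ?_ hnA2)⟩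
  show nA2 ≤ 0
  nlinarith

theorem stmt_15 (n : ℕ) (hn : 3 ≤ n) (R : ℝ) (hR : 0 < R)
    (A : Fin n → Fin n → ℝ)
    (hsym : ∀ i j, A i j = A j i) (htr : ∑ i, A i i = 0)
    (W : Fin n → Fin n → Fin n → Fin n → ℝ)
    (hW1 : ∀ i j k l, W i j k l = - W j i k l)
    (hW2 : ∀ i j k l, W i j k l = - W i j l k)
    (hW3 : ∀ i j k l, W i j k l = W k l i j)
    (hB : ∀ i j k l, W i j k l + W i k l j + W i l j k = 0)
    (hTrW : ∀ j l, ∑ i, W i j i l = 0)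
    (hpinch : (∑ i, ∑ j, ∑ k, ∑ l, (W i j k l) ^ 2)
        + ((n : ℝ) / (2 * ((n : ℝ) - 2))) * (∑ i, ∑ j, (A i j) ^ 2)
        < R ^ 2 / (2 * ((n : ℝ) - 1) * ((n : ℝ) - 2))) :
    let nA2 : ℝ := ∑ i, ∑ j, (A i j) ^ 2
    let E : ℝ := (R / ((n : ℝ) - 1)) * nA2
      - 2 * (∑ i, ∑ j, ∑ k, ∑ l, W i j k l * A i k * A j l)
      + ((n : ℝ) / ((n : ℝ) - 2)) * (∑ i, ∑ j, ∑ k, A i j * A j k * A k i)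
    E ≥ (R / ((n : ℝ) - 1)
          - 2 * Real.sqrt (((n : ℝ) - 2) / (2 * ((n : ℝ) - 1))) *
              Real.sqrt ((∑ i, ∑ j, ∑ k, ∑ l, (W i j k l) ^ 2)
                + ((n : ℝ) / (2 * ((n : ℝ) - 2))) * nA2)) * nA2
      ∧ 0 ≤ E ∧ (E = 0 → ∀ i j, A i j = 0) :=
  stmt_15_general n hn R hR A hsym htr W hW1 hW2 hTrW hpinch
end
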